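/- arXiv:2209.04600 — 12 statements merged into one kernel-verified Lean document; each statement's English description precedes it below -/
import Mathlib

section
/- Let V₁ and V₂ be commuting isometries on a complex Hilbert space H, V := V₁V₂, and let H_u := ⋂_{n ≥ 1} ran(Vⁿ) be the unitary part of the Wold decomposition of V. Then for each i ∈ {1,2}: Vᵢ(H_u) ⊆ H_u and Vᵢ*(H_u) ⊆ H_u (so H_u and H_u^⊥ are both invariant under Vᵢ, i.e., H_u reduces each Vᵢ), and moreover ⋂_{n ≥ 1} ran(Vⁿ) ⊆ ⋂_{n ≥ 1} ran(Vᵢⁿ). -/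
open ContinuousLinearMap
open scoped InnerProductSpace

/-- For commuting isometries `V₁, V₂` on a complex Hilbert space `H` with
`V := V₁V₂` and `H_u := ⋂_{n ≥ 1} ran(Vⁿ)` the unitary part of the Wold decomposition of `V`,
each `Vᵢ` and `Vᵢ*` carries `H_u` into itself (so `H_u` reduces each `Vᵢ`), and moreover
`⋂_{n ≥ 1} ran(Vⁿ) ⊆ ⋂_{n ≥ 1} ran(Vᵢⁿ)` for `i = 1, 2`. -/
theorem stmt2 {H : Type*} [NormedAddCommGroup H] [InnerProductSpace ℂ H] [CompleteSpace H]
    (V₁ V₂ : H →L[ℂ] H)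
    (hV₁ : adjoint V₁ ∘L V₁ = 1) (hV₂ : adjoint V₂ ∘L V₂ = 1)
    (hcomm : V₁ ∘L V₂ = V₂ ∘L V₁)
    (Hu : Submodule ℂ H)
    (hHu : Hu = ⨅ n : ℕ, LinearMap.range (((V₁ ∘L V₂) ^ (n + 1) : H →L[ℂ] H) : H →ₗ[ℂ] H)) :
    Submodule.map (V₁ : H →ₗ[ℂ] H) Hu ≤ Hu ∧ Submodule.map ((adjoint V₁ : H →L[ℂ] H) : H →ₗ[ℂ] H) Hu ≤ Hu ∧
    Submodule.map (V₂ : H →ₗ[ℂ] H) Hu ≤ Hu ∧ Submodule.map ((adjoint V₂ : H →L[ℂ] H) : H →ₗ[ℂ] H) Hu ≤ Hu ∧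
    Hu ≤ ⨅ n : ℕ, LinearMap.range ((V₁ ^ (n + 1) : H →L[ℂ] H) : H →ₗ[ℂ] H) ∧
    Hu ≤ ⨅ n : ℕ, LinearMap.range ((V₂ ^ (n + 1) : H →L[ℂ] H) : H →ₗ[ℂ] H) := by
  set W : H →L[ℂ] H := V₁ ∘L V₂ with hWdef
  have hc : Commute V₁ V₂ := hcomm
  have hcW1 : ∀ n : ℕ, Commute (W ^ n) V₁ :=
    fun n => (((Commute.refl V₁).mul_left hc.symm : Commute W V₁)).pow_left n
  have hcW2 : ∀ n : ℕ, Commute (W ^ n) V₂ :=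
    fun n => ((hc.mul_left (Commute.refl V₂) : Commute W V₂)).pow_left n
  have hcW1' : ∀ (n : ℕ) (y : H), (W ^ n) (V₁ y) = V₁ ((W ^ n) y) := by
    intro n y
    have := DFunLike.congr_fun (hcW1 n) y
    simpa [ContinuousLinearMap.mul_apply] using this
  have hcW2' : ∀ (n : ℕ) (y : H), (W ^ n) (V₂ y) = V₂ ((W ^ n) y) := by
    intro n y
    have := DFunLike.congr_fun (hcW2 n) y
    simpa [ContinuousLinearMap.mul_apply] using this
  have hA1 : ∀ u : H, adjoint V₁ (V₁ u) = u := by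
    intro u
    have := DFunLike.congr_fun hV₁ u
    simpa using this
  have hA2 : ∀ u : H, adjoint V₂ (V₂ u) = u := by
    intro u
    have := DFunLike.congr_fun hV₂ u
    simpa using this
  have hWapp : ∀ u : H, W u = V₁ (V₂ u) := fun u => rfl
  have hWapp' : ∀ u : H, W u = V₂ (V₁ u) := by
    intro u
    have := DFunLike.congr_fun hcomm u
    simpa using this
  have mem_iff : ∀ x : H, x ∈ Hu ↔ ∀ n : ℕ, ∃ y : H, (W ^ (n + 1)) y = x := by
    intro x
    simp only [hHu, Submodule.mem_iInf, LinearMap.mem_range, ContinuousLinearMap.coe_coe]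
  have hsucc : ∀ (n : ℕ) (y : H), (W ^ (n + 1)) y = W ((W ^ n) y) := by
    intro n y
    rw [pow_succ']
    rfl
  refine ⟨?_, ?_, ?_, ?_, ?_, ?_⟩
  · rintro x ⟨z, hz, rfl⟩
    replace hz := (mem_iff z).mp hz
    refine (mem_iff _).mpr fun n => ?_
    obtain ⟨y, hy⟩ := hz n
    exact ⟨V₁ y, by rw [hcW1' (n + 1) y, hy]; rfl⟩
  · rintro x ⟨z, hz, rfl⟩
    replace hz := (mem_iff z).mp hz
    refine (mem_iff _).mpr fun n => ?_
    obtain ⟨y, hy⟩ := hz (n + 1)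
    refine ⟨V₂ y, ?_⟩
    have h1 : z = V₁ (V₂ ((W ^ (n + 1)) y)) := by
      rw [← hy, hsucc (n + 1) y, hWapp]
    rw [hcW2' (n + 1) y, h1]; exact (hA1 _).symm
  · rintro x ⟨z, hz, rfl⟩
    replace hz := (mem_iff z).mp hz
    refine (mem_iff _).mpr fun n => ?_
    obtain ⟨y, hy⟩ := hz n
    exact ⟨V₂ y, by rw [hcW2' (n + 1) y, hy]; rfl⟩
  · rintro x ⟨z, hz, rfl⟩
    replace hz := (mem_iff z).mp hz
    refine (mem_iff _).mpr fun n => ?_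
    obtain ⟨y, hy⟩ := hz (n + 1)
    refine ⟨V₁ y, ?_⟩
    have h1 : z = V₂ (V₁ ((W ^ (n + 1)) y)) := by
      rw [← hy, hsucc (n + 1) y, hWapp']
    rw [hcW1' (n + 1) y, h1]; exact (hA2 _).symm
  · intro x hx
    rw [mem_iff] at hx
    rw [Submodule.mem_iInf]
    intro n
    obtain ⟨y, hy⟩ := hx n
    refine ⟨(V₂ ^ (n + 1)) y, ?_⟩
    have hmp : (W ^ (n + 1)) y = (V₁ ^ (n + 1)) ((V₂ ^ (n + 1)) y) := by
      have := DFunLike.congr_fun (hc.mul_pow (n + 1)) y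
      exact this
    exact hmp.symm.trans hy
  · intro x hx
    rw [mem_iff] at hx
    rw [Submodule.mem_iInf]
    intro n
    obtain ⟨y, hy⟩ := hx n
    refine ⟨(V₁ ^ (n + 1)) y, ?_⟩
    have hW' : W = V₂ * V₁ := hcomm
    have hmp : (W ^ (n + 1)) y = (V₂ ^ (n + 1)) ((V₁ ^ (n + 1)) y) := by
      have := DFunLike.congr_fun (congrArg (· ^ (n + 1)) hW') y
      have h2 := DFunLike.congr_fun (hc.symm.mul_pow (n + 1)) y
      simp only [ContinuousLinearMap.mul_apply] at h2 ⊢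
      calc (W ^ (n+1)) y = ((V₂ * V₁) ^ (n+1)) y := by rw [← hW']
        _ = (V₂ ^ (n+1)) ((V₁ ^ (n+1)) y) := h2
    exact hmp.symm.trans hy
end

section
/- Let V₁ and V₂ be commuting isometries on a complex Hilbert space H. Then the pair (V₁, V₂) is doubly commuting, i.e., V₁*V₂ = V₂V₁*, if and only if V₂(ker V₁*) ⊆ ker V₁* and V₁(ker V₂*) ⊆ ker V₂*. Moreover the two invariance conditions are equivalent to each other: V₂(ker V₁*) ⊆ ker V₁* holds if and only if V₁(ker V₂*) ⊆ ker V₂* holds. -/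
open ContinuousLinearMap
open scoped InnerProductSpace

private lemma key3 {H : Type*} [NormedAddCommGroup H] [InnerProductSpace ℂ H] [CompleteSpace H]
    (V₁ V₂ : H →L[ℂ] H)
    (hV₁ : adjoint V₁ ∘L V₁ = 1)
    (hcomm : V₁ ∘L V₂ = V₂ ∘L V₁) :
    adjoint V₁ ∘L V₂ = V₂ ∘L adjoint V₁ ↔
      Submodule.map (V₂ : H →ₗ[ℂ] H) (LinearMap.ker (adjoint V₁ : H →ₗ[ℂ] H)) ≤ LinearMap.ker (adjoint V₁ : H →ₗ[ℂ] H) := by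
  constructor
  · intro h x hx
    obtain ⟨y, hy, rfl⟩ := hx
    have hy' : adjoint V₁ y = 0 := hy
    have := ContinuousLinearMap.ext_iff.mp h y
    simp only [comp_apply] at this
    simp [LinearMap.mem_ker, this, hy']
  · intro h
    ext x
    simp only [comp_apply]
    have hVV : ∀ z, adjoint V₁ (V₁ z) = z := fun z => by
      have := ContinuousLinearMap.ext_iff.mp hV₁ z
      simpa using this
    have hker : (x - V₁ (adjoint V₁ x)) ∈ LinearMap.ker (adjoint V₁ : H →ₗ[ℂ] H) := by
      simp [LinearMap.mem_ker, map_sub, hVV]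
    have h2 : adjoint V₁ (V₂ (x - V₁ (adjoint V₁ x))) = 0 :=
      h ⟨_, hker, rfl⟩
    have h3 : V₂ x = V₂ (x - V₁ (adjoint V₁ x)) + V₂ (V₁ (adjoint V₁ x)) := by
      rw [← map_add, sub_add_cancel]
    have h4 : V₂ (V₁ (adjoint V₁ x)) = V₁ (V₂ (adjoint V₁ x)) := by
      have := ContinuousLinearMap.ext_iff.mp hcomm (adjoint V₁ x)
      simpa using this.symm
    rw [h3, map_add, h2, h4, hVV, zero_add]

/-- Commuting isometries `V₁, V₂` on a complex Hilbert space are doubly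
commuting (`V₁*V₂ = V₂V₁*`) if and only if `V₂(ker V₁*) ⊆ ker V₁*` and
`V₁(ker V₂*) ⊆ ker V₂*`; moreover the two invariance conditions are equivalent to each
other. -/
theorem stmt3 {H : Type*} [NormedAddCommGroup H] [InnerProductSpace ℂ H] [CompleteSpace H]
    (V₁ V₂ : H →L[ℂ] H)
    (hV₁ : adjoint V₁ ∘L V₁ = 1) (hV₂ : adjoint V₂ ∘L V₂ = 1)
    (hcomm : V₁ ∘L V₂ = V₂ ∘L V₁) :
    (adjoint V₁ ∘L V₂ = V₂ ∘L adjoint V₁ ↔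
      (Submodule.map (V₂ : H →ₗ[ℂ] H) (LinearMap.ker (adjoint V₁ : H →ₗ[ℂ] H)) ≤ LinearMap.ker (adjoint V₁ : H →ₗ[ℂ] H) ∧
       Submodule.map (V₁ : H →ₗ[ℂ] H) (LinearMap.ker (adjoint V₂ : H →ₗ[ℂ] H)) ≤ LinearMap.ker (adjoint V₂ : H →ₗ[ℂ] H))) ∧
    (Submodule.map (V₂ : H →ₗ[ℂ] H) (LinearMap.ker (adjoint V₁ : H →ₗ[ℂ] H)) ≤ LinearMap.ker (adjoint V₁ : H →ₗ[ℂ] H) ↔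
      Submodule.map (V₁ : H →ₗ[ℂ] H) (LinearMap.ker (adjoint V₂ : H →ₗ[ℂ] H)) ≤ LinearMap.ker (adjoint V₂ : H →ₗ[ℂ] H)) := by
  have k1 := key3 V₁ V₂ hV₁ hcomm
  have k2 := key3 V₂ V₁ hV₂ hcomm.symm
  have swap : (adjoint V₁ ∘L V₂ = V₂ ∘L adjoint V₁) ↔
      (adjoint V₂ ∘L V₁ = V₁ ∘L adjoint V₂) := by
    constructor <;> intro h <;>
    · have := congrArg ContinuousLinearMap.adjoint h
      simpa [adjoint_comp, adjoint_adjoint] using this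
  have equivs : (Submodule.map (V₂ : H →ₗ[ℂ] H) (LinearMap.ker (adjoint V₁ : H →ₗ[ℂ] H)) ≤ LinearMap.ker (adjoint V₁ : H →ₗ[ℂ] H)) ↔
      (Submodule.map (V₁ : H →ₗ[ℂ] H) (LinearMap.ker (adjoint V₂ : H →ₗ[ℂ] H)) ≤ LinearMap.ker (adjoint V₂ : H →ₗ[ℂ] H)) := by
    rw [← k1, ← k2, swap]
  refine ⟨?_, equivs⟩
  rw [k1]
  constructor
  · intro h; exact ⟨h, equivs.mp h⟩
  · exact fun h => h.1
end

section
/- Let V₁ and V₂ be commuting isometries on a complex Hilbert space H, W₁ := ker V₁*, W₂ := ker V₂*, and let F₂ := P_{W₁}V₂P_{W₁} and F₁ := P_{W₂}V₁P_{W₂} be the Fringe operators. Then F₂*F₂ = P_{W₁} (i.e., the restriction of F₂ to W₁ is isometric) if and only if V₂(W₁) ⊆ W₁; similarly F₁*F₁ = P_{W₂} if and only if V₁(W₂) ⊆ W₂. -/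
open ContinuousLinearMap
open scoped InnerProductSpace

lemma fringe_key {H : Type*} [NormedAddCommGroup H] [InnerProductSpace ℂ H] [CompleteSpace H]
    (V W : H →L[ℂ] H)
    (hV : adjoint V ∘L V = 1) (hW : adjoint W ∘L W = 1)
    (F : H →L[ℂ] H)
    (hF : F = (1 - V ∘L adjoint V) ∘L (W ∘L (1 - V ∘L adjoint V))) :
    adjoint F ∘L F = 1 - V ∘L adjoint V ↔
      Submodule.map (W : H →ₗ[ℂ] H) (LinearMap.ker (adjoint V : H →ₗ[ℂ] H)) ≤ LinearMap.ker (adjoint V : H →ₗ[ℂ] H) := by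
  set P : H →L[ℂ] H := 1 - V ∘L adjoint V with hP
  have hVV : ∀ x, adjoint V (V x) = x := fun x => congrFun (congrArg DFunLike.coe hV) x
  have hWW : ∀ x, adjoint W (W x) = x := fun x => congrFun (congrArg DFunLike.coe hW) x
  have hPapp : ∀ x, P x = x - V (adjoint V x) := by intro x; simp [hP]
  have hPker : ∀ x, adjoint V (P x) = 0 := by
    intro x; rw [hPapp]; simp [hVV]
  have hPfix : ∀ z, adjoint V z = 0 → P z = z := by
    intro z hz; rw [hPapp, hz]; simp
  have hPidem : ∀ x, P (P x) = P x := fun x => hPfix _ (hPker x)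
  have hone : adjoint (1 : H →L[ℂ] H) = 1 := by
    rw [← ContinuousLinearMap.star_eq_adjoint]; exact star_one _
  have hPadj : adjoint P = P := by
    rw [hP, map_sub, hone, adjoint_comp, adjoint_adjoint]
  constructor
  · intro h y hy
    obtain ⟨x, hx, rfl⟩ := hy
    have hx' : adjoint V x = 0 := hx
    set z := W x with hz
    have hFx : F x = P z := by rw [hF]; simp [hPfix x hx', hz]
    have h1 : (⟪P z, P z⟫_ℂ : ℂ) = ⟪z, P z⟫_ℂ := by
      calc ⟪P z, P z⟫_ℂ = ⟪z, adjoint P (P z)⟫_ℂ := by rw [adjoint_inner_right]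
        _ = ⟪z, P z⟫_ℂ := by rw [hPadj, hPidem]
    have h2 : (⟪P z, z⟫_ℂ : ℂ) = ⟪z, P z⟫_ℂ := by
      have e := adjoint_inner_left P z z
      rw [hPadj] at e; exact e
    have h3 : (⟪z, P z⟫_ℂ : ℂ) = ⟪z, z⟫_ℂ := by
      have hc := congrFun (congrArg DFunLike.coe h) x
      have e1 : (⟪x, (adjoint F ∘L F) x⟫_ℂ : ℂ) = ⟪F x, F x⟫_ℂ := by
        simp [ContinuousLinearMap.comp_apply, adjoint_inner_right]
      have e2 : (⟪x, P x⟫_ℂ : ℂ) = ⟪x, x⟫_ℂ := by rw [hPfix x hx']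
      have e3 : (⟪z, z⟫_ℂ : ℂ) = ⟪x, x⟫_ℂ := by
        rw [hz, ← adjoint_inner_right, hWW]
      rw [hc, hFx, h1] at e1
      rw [← e1, e2, e3]
    have h4 : (⟪z - P z, z - P z⟫_ℂ : ℂ) = 0 := by
      rw [inner_sub_left, inner_sub_right, inner_sub_right, h1, h2, h3]
      ring
    have h5 : z - P z = 0 := inner_self_eq_zero.mp h4
    have h6 : V (adjoint V z) = 0 := by
      rw [hPapp] at h5; simpa using h5
    have : adjoint V (V (adjoint V z)) = adjoint V 0 := congrArg _ h6
    rw [hVV, map_zero] at this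
    exact this
  · intro h
    ext x
    have hker : adjoint V (P x) = 0 := hPker x
    have hmem : W (P x) ∈ LinearMap.ker (adjoint V : H →ₗ[ℂ] H) := h ⟨P x, hker, rfl⟩
    have hfix : P (W (P x)) = W (P x) := hPfix _ hmem
    have hFadj : adjoint F = (P ∘L adjoint W) ∘L P := by
      rw [hF, adjoint_comp, adjoint_comp, hPadj]
    have hFx : F x = W (P x) := by
      rw [hF]; simp only [ContinuousLinearMap.comp_apply, hPidem]; exact hfix
    calc (adjoint F ∘L F) x = P (adjoint W (P (F x))) := by
          simp only [hFadj, ContinuousLinearMap.comp_apply]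
      _ = P (adjoint W (W (P x))) := by rw [hFx, hfix]
      _ = P x := by rw [hWW, hPidem]

/-- For commuting isometries `V₁, V₂` on a complex Hilbert space, with
`W₁ := ker V₁*`, `W₂ := ker V₂*` and Fringe operators `F₂ := P_{W₁}V₂P_{W₁}`,
`F₁ := P_{W₂}V₁P_{W₂}`: one has `F₂*F₂ = P_{W₁}` iff `V₂(W₁) ⊆ W₁`, and similarly
`F₁*F₁ = P_{W₂}` iff `V₁(W₂) ⊆ W₂`. -/
theorem stmt4 {H : Type*} [NormedAddCommGroup H] [InnerProductSpace ℂ H] [CompleteSpace H]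
    (V₁ V₂ : H →L[ℂ] H)
    (hV₁ : adjoint V₁ ∘L V₁ = 1) (hV₂ : adjoint V₂ ∘L V₂ = 1)
    (hcomm : V₁ ∘L V₂ = V₂ ∘L V₁)
    (F₁ F₂ : H →L[ℂ] H)
    (hF₁ : F₁ = (1 - V₂ ∘L adjoint V₂) ∘L (V₁ ∘L (1 - V₂ ∘L adjoint V₂)))
    (hF₂ : F₂ = (1 - V₁ ∘L adjoint V₁) ∘L (V₂ ∘L (1 - V₁ ∘L adjoint V₁))) :
    (adjoint F₂ ∘L F₂ = 1 - V₁ ∘L adjoint V₁ ↔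
      Submodule.map (V₂ : H →ₗ[ℂ] H) (LinearMap.ker (adjoint V₁ : H →ₗ[ℂ] H)) ≤ LinearMap.ker (adjoint V₁ : H →ₗ[ℂ] H)) ∧
    (adjoint F₁ ∘L F₁ = 1 - V₂ ∘L adjoint V₂ ↔
      Submodule.map (V₁ : H →ₗ[ℂ] H) (LinearMap.ker (adjoint V₂ : H →ₗ[ℂ] H)) ≤ LinearMap.ker (adjoint V₂ : H →ₗ[ℂ] H)) := by
  exact ⟨fringe_key V₁ V₂ hV₁ hV₂ F₂ hF₂, fringe_key V₂ V₁ hV₂ hV₁ F₁ hF₁⟩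
end

section
/- Let V₁ and V₂ be commuting isometries on a complex Hilbert space H, W₁ := ker V₁*, W₂ := ker V₂*, F₂ := P_{W₁}V₂P_{W₁}, and write [A*,B] := A*B − BA*. Then F₂*F₂ = P_{W₁} − [V₂*,V₁][V₁*,V₂]P_{W₁} and F₂F₂* = P_{W₁} − P_{W₁}P_{W₂}P_{W₁}. In particular, the operator [V₂*,V₁][V₁*,V₂] maps W₁ into W₁. -/
open ContinuousLinearMap
open scoped InnerProductSpace

private lemma stmt5_ring {R : Type*} [Ring R] (a b a' b' : R)
    (h1 : a' * a = 1) (h2 : b' * b = 1) (h3 : a * b = b * a) (h4 : b' * a' = a' * b') :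
    ((((1 - a * a') * b') * (1 - a * a')) * ((1 - a * a') * (b * (1 - a * a')))
      = (1 - a * a') - ((b' * a - a * b') * (a' * b - b * a')) * (1 - a * a'))
    ∧ (((1 - a * a') * (b * (1 - a * a'))) * ((((1 - a * a') * b') * (1 - a * a')))
      = (1 - a * a') - (1 - a * a') * ((1 - b * b') * (1 - a * a')))
    ∧ a' * ((b' * a - a * b') * (a' * b - b * a')) = 0 := by
  have r1 : ∀ x : R, a' * (a * x) = x := fun x => by rw [← mul_assoc, h1, one_mul]
  have r2 : ∀ x : R, b' * (b * x) = x := fun x => by rw [← mul_assoc, h2, one_mul]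
  have r3 : ∀ x : R, a * (b * x) = b * (a * x) := fun x => by
    rw [← mul_assoc, h3, mul_assoc]
  have r4 : ∀ x : R, b' * (a' * x) = a' * (b' * x) := fun x => by
    rw [← mul_assoc, h4, mul_assoc]
  have r5 : ∀ x : R, a' * (b' * (a * x)) = b' * x := fun x => by rw [← r4, r1]
  have r5' : a' * (b' * a) = b' := by rw [← mul_assoc, ← h4, mul_assoc, h1, mul_one]
  have r6 : ∀ x : R, a' * (b * (a * x)) = b * x := fun x => by rw [← r3, r1]
  have r6' : a' * (b * a) = b := by rw [← h3, r1]
  refine ⟨?_, ?_, ?_⟩ <;>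
    · simp only [mul_sub, sub_mul, mul_one, one_mul, mul_assoc, r1, r2, r5, r6, r5', r6',
        r3, r4, h1, h2, h3, h4]
      abel

/-- For commuting isometries `V₁, V₂` on a complex Hilbert space, with
`W₁ := ker V₁*`, `W₂ := ker V₂*`, `F₂ := P_{W₁}V₂P_{W₁}` and `[A*,B] := A*B − BA*`:
`F₂*F₂ = P_{W₁} − [V₂*,V₁][V₁*,V₂]P_{W₁}` and `F₂F₂* = P_{W₁} − P_{W₁}P_{W₂}P_{W₁}`.
In particular `[V₂*,V₁][V₁*,V₂]` maps `W₁` into `W₁`. -/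
theorem stmt5 {H : Type*} [NormedAddCommGroup H] [InnerProductSpace ℂ H] [CompleteSpace H]
    (V₁ V₂ : H →L[ℂ] H)
    (hV₁ : adjoint V₁ ∘L V₁ = 1) (hV₂ : adjoint V₂ ∘L V₂ = 1)
    (hcomm : V₁ ∘L V₂ = V₂ ∘L V₁)
    (F₂ : H →L[ℂ] H)
    (hF₂ : F₂ = (1 - V₁ ∘L adjoint V₁) ∘L (V₂ ∘L (1 - V₁ ∘L adjoint V₁))) :
    (adjoint F₂ ∘L F₂ = (1 - V₁ ∘L adjoint V₁)
        - ((adjoint V₂ ∘L V₁ - V₁ ∘L adjoint V₂) ∘L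
            (adjoint V₁ ∘L V₂ - V₂ ∘L adjoint V₁)) ∘L (1 - V₁ ∘L adjoint V₁)) ∧
    (F₂ ∘L adjoint F₂ = (1 - V₁ ∘L adjoint V₁)
        - (1 - V₁ ∘L adjoint V₁) ∘L ((1 - V₂ ∘L adjoint V₂) ∘L (1 - V₁ ∘L adjoint V₁))) ∧
    (Submodule.map
        (((adjoint V₂ ∘L V₁ - V₁ ∘L adjoint V₂) ∘L (adjoint V₁ ∘L V₂ - V₂ ∘L adjoint V₁) :
          H →ₗ[ℂ] H))
        (LinearMap.ker (adjoint V₁ : H →ₗ[ℂ] H)) ≤ LinearMap.ker (adjoint V₁ : H →ₗ[ℂ] H)) := by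
  have h4 : adjoint V₂ ∘L adjoint V₁ = adjoint V₁ ∘L adjoint V₂ := by
    rw [← adjoint_comp, ← adjoint_comp, hcomm]
  -- adjoint of the projection P = 1 - V₁ V₁*
  have hadj1 : adjoint (1 : H →L[ℂ] H) = 1 := by
    rw [one_def, adjoint_id]
  have hPadj : adjoint (1 - V₁ ∘L adjoint V₁) = 1 - V₁ ∘L adjoint V₁ := by
    rw [map_sub, hadj1, adjoint_comp, adjoint_adjoint]
  have hFadj : adjoint F₂
      = ((1 - V₁ ∘L adjoint V₁) ∘L adjoint V₂) ∘L (1 - V₁ ∘L adjoint V₁) := by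
    rw [hF₂, adjoint_comp, adjoint_comp, hPadj, comp_assoc]
  obtain ⟨k1, k2, k3⟩ := stmt5_ring V₁ V₂ (adjoint V₁) (adjoint V₂) hV₁ hV₂ hcomm h4
  refine ⟨?_, ?_, ?_⟩
  · rw [hFadj, hF₂]; exact k1
  · rw [hFadj, hF₂]; exact k2
  · rintro x ⟨y, hy, rfl⟩
    have : (adjoint V₁ ∘L ((adjoint V₂ ∘L V₁ - V₁ ∘L adjoint V₂) ∘L
        (adjoint V₁ ∘L V₂ - V₂ ∘L adjoint V₁))) y = 0 := by
      simp only [← ContinuousLinearMap.mul_def]; rw [k3]; rfl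
    simpa [LinearMap.mem_ker] using this
end

section
/- Let V₁ and V₂ be commuting isometries on a complex Hilbert space H, V := V₁V₂, C := I − V₁V₁* − V₂V₂* + VV*, and write [A*,B] := A*B − BA*. Then C = P_{W₁}P_{W₂} − V₁[V₁*,V₂]V₂* = P_{W₂}P_{W₁} − V₂[V₂*,V₁]V₁*, and C² = P_{W₁}P_{W₂}P_{W₁} + V₁[V₁*,V₂][V₂*,V₁]V₁*, where the two summands in the expression for C² are mutually orthogonal: (P_{W₁}P_{W₂}P_{W₁})·(V₁[V₁*,V₂][V₂*,V₁]V₁*) = 0. -/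
open ContinuousLinearMap
open scoped InnerProductSpace

/-- Abstract ring-level core of Statement 6: given `a*v = 1`, `b*w = 1`, `v*w = w*v`,
`a*b = b*a` in a (noncommutative) ring, the four identities hold. -/
theorem stmt6_ring {R : Type*} [Ring R] (v w a b : R)
    (h1 : a * v = 1) (h2 : b * w = 1) (h3 : v * w = w * v) (h4 : a * b = b * a)
    (C : R) (hC : C = 1 - v * a - w * b + (v * w) * (b * a)) :
    (C = (1 - v * a) * (1 - w * b) - v * ((a * w - w * a) * b)) ∧
    (C = (1 - w * b) * (1 - v * a) - w * ((b * v - v * b) * a)) ∧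
    (C * C = (1 - v * a) * ((1 - w * b) * (1 - v * a))
        + v * (((a * w - w * a) * (b * v - v * b)) * a)) ∧
    (((1 - v * a) * ((1 - w * b) * (1 - v * a))) *
        (v * (((a * w - w * a) * (b * v - v * b)) * a)) = 0) := by
  have h1' : ∀ x : R, a * (v * x) = x := by
    intro x; rw [← mul_assoc, h1, one_mul]
  have h2' : ∀ x : R, b * (w * x) = x := by
    intro x; rw [← mul_assoc, h2, one_mul]
  have e1 : C = (1 - v * a) * (1 - w * b) - v * ((a * w - w * a) * b) := by
    rw [hC, ← h4]
    noncomm_ring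
  have e2 : C = (1 - w * b) * (1 - v * a) - w * ((b * v - v * b) * a) := by
    rw [hC, h3]
    noncomm_ring
  refine ⟨e1, e2, ?_, ?_⟩
  · calc C * C = ((1 - v * a) * (1 - w * b) - v * ((a * w - w * a) * b)) *
        ((1 - w * b) * (1 - v * a) - w * ((b * v - v * b) * a)) := by rw [← e1, ← e2]
    _ = (1 - v * a) * ((1 - w * b) * (1 - v * a))
        + v * (((a * w - w * a) * (b * v - v * b)) * a) := by
      simp only [mul_sub, sub_mul, mul_one, one_mul, mul_assoc, h1', h2', h1, h2]
      abel
  · simp only [mul_sub, sub_mul, mul_one, one_mul, mul_assoc, h1', h2', h1, h2]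
    abel

/-- For commuting isometries `V₁, V₂` on a complex Hilbert space, with
`V := V₁V₂`, `C := I − V₁V₁* − V₂V₂* + VV*` and `[A*,B] := A*B − BA*`:
`C = P_{W₁}P_{W₂} − V₁[V₁*,V₂]V₂* = P_{W₂}P_{W₁} − V₂[V₂*,V₁]V₁*`, and
`C² = P_{W₁}P_{W₂}P_{W₁} + V₁[V₁*,V₂][V₂*,V₁]V₁*`, where the two summands are mutually
orthogonal: their product is `0`. -/
theorem stmt6 {H : Type*} [NormedAddCommGroup H] [InnerProductSpace ℂ H] [CompleteSpace H]
    (V₁ V₂ : H →L[ℂ] H)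
    (hV₁ : adjoint V₁ ∘L V₁ = 1) (hV₂ : adjoint V₂ ∘L V₂ = 1)
    (hcomm : V₁ ∘L V₂ = V₂ ∘L V₁)
    (C : H →L[ℂ] H)
    (hC : C = 1 - V₁ ∘L adjoint V₁ - V₂ ∘L adjoint V₂
        + (V₁ ∘L V₂) ∘L adjoint (V₁ ∘L V₂)) :
    (C = (1 - V₁ ∘L adjoint V₁) ∘L (1 - V₂ ∘L adjoint V₂)
        - V₁ ∘L ((adjoint V₁ ∘L V₂ - V₂ ∘L adjoint V₁) ∘L adjoint V₂)) ∧
    (C = (1 - V₂ ∘L adjoint V₂) ∘L (1 - V₁ ∘L adjoint V₁)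
        - V₂ ∘L ((adjoint V₂ ∘L V₁ - V₁ ∘L adjoint V₂) ∘L adjoint V₁)) ∧
    (C ∘L C = (1 - V₁ ∘L adjoint V₁) ∘L ((1 - V₂ ∘L adjoint V₂) ∘L (1 - V₁ ∘L adjoint V₁))
        + V₁ ∘L (((adjoint V₁ ∘L V₂ - V₂ ∘L adjoint V₁) ∘L
            (adjoint V₂ ∘L V₁ - V₁ ∘L adjoint V₂)) ∘L adjoint V₁)) ∧
    (((1 - V₁ ∘L adjoint V₁) ∘L ((1 - V₂ ∘L adjoint V₂) ∘L (1 - V₁ ∘L adjoint V₁))) ∘L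
        (V₁ ∘L (((adjoint V₁ ∘L V₂ - V₂ ∘L adjoint V₁) ∘L
            (adjoint V₂ ∘L V₁ - V₁ ∘L adjoint V₂)) ∘L adjoint V₁)) = 0) := by
  have hadj : adjoint (V₁ ∘L V₂) = adjoint V₂ ∘L adjoint V₁ := adjoint_comp V₁ V₂
  have h4 : adjoint V₁ ∘L adjoint V₂ = adjoint V₂ ∘L adjoint V₁ := by
    rw [← adjoint_comp, ← adjoint_comp, hcomm]
  rw [hadj] at hC
  simp only [← ContinuousLinearMap.mul_def] at *
  exact stmt6_ring V₁ V₂ (adjoint V₁) (adjoint V₂) hV₁ hV₂ hcomm h4 C hC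
end

section
/- Let V₁ and V₂ be commuting isometries on a complex Hilbert space H such that V := V₁V₂ is pure (i.e., ‖(V*)ⁿh‖ → 0 for every h ∈ H), let C := I − V₁V₁* − V₂V₂* + VV*, W₁ := ker V₁*, and F₂ := P_{W₁}V₂P_{W₁}. Then the following conditions are equivalent: (i) C ≥ 0 (C is a positive operator); (ii) V₂(W₁) ⊆ W₁; (iii) V₁*V₂ = V₂V₁* (the pair is doubly commuting); (iv) C is an orthogonal projection (C is self-adjoint and C² = C); (v) F₂*F₂ = P_{W₁}. -/
/-! Work in the C*-algebra of bounded operators and let `p = 1 - V₁V₁*` be the projection onto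
`W₁`. The commutator `c = V₁*V₂ - V₂V₁*` equals `V₁*V₂p`, and conditions (i) and (v) are
quadratic in it: `V₁*CV₁ = -cc*` and `p - F₂*F₂ = c*c`, so either forces `c = 0` by the
C*-identity. Conversely, for a doubly commuting pair `C = p(1 - V₂V₂*)` is a product of
commuting projections, and (ii) says exactly that `V₁*V₂p = 0`. -/

section StarRing

variable {A : Type*} [Ring A] [StarRing A] {v v₁ v₂ : A}

def jointDefect (v₁ v₂ : A) : A := 1 - v₁ * star v₁ - v₂ * star v₂ + v₁ * v₂ * star (v₁ * v₂)

def fringe (v₁ v₂ : A) : A := (1 - v₁ * star v₁) * (v₂ * (1 - v₁ * star v₁))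

theorem isStarProjection_one_sub_mul_star (h : star v * v = 1) :
    IsStarProjection (1 - v * star v) :=
  IsStarProjection.one_sub
    ⟨by rw [IsIdempotentElem, mul_assoc, ← mul_assoc (star v), h, one_mul], by simp [IsSelfAdjoint]⟩

theorem star_mul_one_sub_mul_star (h : star v * v = 1) : star v * (1 - v * star v) = 0 := by
  rw [mul_sub, mul_one, ← mul_assoc, h, one_mul, sub_self]

theorem star_mul_mul_one_sub_mul_star (h₁ : star v₁ * v₁ = 1) (hc : v₁ * v₂ = v₂ * v₁) :
    star v₁ * v₂ * (1 - v₁ * star v₁) = star v₁ * v₂ - v₂ * star v₁ :=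
  calc star v₁ * v₂ * (1 - v₁ * star v₁) = star v₁ * v₂ - star v₁ * (v₂ * v₁) * star v₁ := by
        noncomm_ring
    _ = star v₁ * v₂ - v₂ * star v₁ := by rw [← hc, ← mul_assoc, h₁, one_mul]

theorem jointDefect_eq (hc : v₁ * v₂ = v₂ * v₁) :
    jointDefect v₁ v₂ = (1 - v₁ * star v₁) - v₂ * (1 - v₁ * star v₁) * star v₂ := by
  have : v₂ * (1 - v₁ * star v₁) * star v₂ = v₂ * star v₂ - v₂ * v₁ * star (v₂ * v₁) := by
    rw [star_mul]; noncomm_ring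
  rw [this, ← hc, jointDefect]
  abel

theorem star_mul_jointDefect_mul (h₁ : star v₁ * v₁ = 1) (hc : v₁ * v₂ = v₂ * v₁) :
    star v₁ * jointDefect v₁ v₂ * v₁ =
      -((star v₁ * v₂ - v₂ * star v₁) * star (star v₁ * v₂ - v₂ * star v₁)) := by
  have hp := isStarProjection_one_sub_mul_star h₁
  have hv₁p := star_mul_one_sub_mul_star h₁
  rw [← star_mul_mul_one_sub_mul_star h₁ hc, jointDefect_eq hc]
  generalize 1 - v₁ * star v₁ = p at *
  simp only [star_mul, star_star, hp.isSelfAdjoint.star_eq]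
  calc star v₁ * (p - v₂ * p * star v₂) * v₁
      = star v₁ * p * v₁ - star v₁ * v₂ * (p * p) * star v₂ * v₁ := by
        rw [hp.isIdempotentElem.eq]; noncomm_ring
    _ = _ := by rw [hv₁p]; noncomm_ring

theorem one_sub_mul_star_sub_star_fringe_mul_fringe (h₁ : star v₁ * v₁ = 1)
    (h₂ : star v₂ * v₂ = 1) (hc : v₁ * v₂ = v₂ * v₁) :
    (1 - v₁ * star v₁) - star (fringe v₁ v₂) * fringe v₁ v₂ =
      star (star v₁ * v₂ - v₂ * star v₁) * (star v₁ * v₂ - v₂ * star v₁) := by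
  have hp := isStarProjection_one_sub_mul_star h₁
  rw [← star_mul_mul_one_sub_mul_star h₁ hc, fringe]
  generalize hp_def : 1 - v₁ * star v₁ = p at *
  have hv : ∀ x, v₁ * (star v₁ * x) = x - p * x := fun x => by
    rw [← hp_def, ← mul_assoc]; noncomm_ring
  have hpp : ∀ x, p * (p * x) = p * x := fun x => by rw [← mul_assoc, hp.isIdempotentElem.eq]
  have h₂' : ∀ x, star v₂ * (v₂ * x) = x := fun x => by rw [← mul_assoc, h₂, one_mul]
  simp only [star_mul, star_star, hp.isSelfAdjoint.star_eq, mul_assoc, hv, hpp, h₂', mul_sub,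
    hp.isIdempotentElem.eq]

theorem isStarProjection_jointDefect (h₁ : star v₁ * v₁ = 1) (h₂ : star v₂ * v₂ = 1)
    (hc : v₁ * v₂ = v₂ * v₁) (hd : star v₁ * v₂ = v₂ * star v₁) :
    IsStarProjection (jointDefect v₁ v₂) := by
  have hd' : star v₂ * v₁ = v₁ * star v₂ := by simpa using congrArg star hd
  have hcs : star v₂ * star v₁ = star v₁ * star v₂ := by rw [← star_mul, ← star_mul, hc]
  have h₁₂ : v₁ * star v₁ * (v₂ * star v₂) = v₁ * v₂ * star (v₁ * v₂) := by
    rw [star_mul, hcs, mul_assoc, ← mul_assoc (star v₁), hd]; noncomm_ring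
  have h₂₁ : v₂ * star v₂ * (v₁ * star v₁) = v₁ * v₂ * star (v₁ * v₂) := by
    rw [star_mul, hc, mul_assoc, ← mul_assoc (star v₂), hd']; noncomm_ring
  have hcomm : Commute (1 - v₁ * star v₁) (1 - v₂ * star v₂) :=
    (Commute.one_right _).sub_right ((Commute.one_left _).sub_left (h₁₂.trans h₂₁.symm))
  convert (isStarProjection_one_sub_mul_star h₁).mul (isStarProjection_one_sub_mul_star h₂) hcomm
    using 1
  rw [jointDefect, ← h₁₂]
  noncomm_ring

end StarRing

section CStarRing

variable {A : Type*} [NormedRing A] [StarRing A] [CStarRing A] {v₁ v₂ : A}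

theorem star_mul_eq_mul_star_of_nonneg_jointDefect [PartialOrder A] [StarOrderedRing A]
    (h₁ : star v₁ * v₁ = 1) (hc : v₁ * v₂ = v₂ * v₁) (hC : 0 ≤ jointDefect v₁ v₂) :
    star v₁ * v₂ = v₂ * star v₁ := by
  have hconj := star_left_conjugate_nonneg hC v₁
  rw [star_mul_jointDefect_mul h₁ hc, neg_nonneg] at hconj
  rw [← sub_eq_zero, ← CStarRing.mul_star_self_eq_zero_iff]
  exact le_antisymm hconj (mul_star_self_nonneg _)

theorem star_fringe_mul_fringe_eq_iff (h₁ : star v₁ * v₁ = 1) (h₂ : star v₂ * v₂ = 1)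
    (hc : v₁ * v₂ = v₂ * v₁) :
    star (fringe v₁ v₂) * fringe v₁ v₂ = 1 - v₁ * star v₁ ↔ star v₁ * v₂ = v₂ * star v₁ := by
  rw [eq_comm, ← sub_eq_zero, one_sub_mul_star_sub_star_fringe_mul_fringe h₁ h₂ hc,
    CStarRing.star_mul_self_eq_zero_iff, sub_eq_zero]

end CStarRing

theorem ContinuousLinearMap.map_ker_le_ker_iff {𝕜 E : Type*} [NontriviallyNormedField 𝕜]
    [NormedAddCommGroup E] [NormedSpace 𝕜 E] {s v w : E →L[𝕜] E} (hs : s * v = 1) :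
    (LinearMap.ker (s : E →ₗ[𝕜] E)).map (w : E →ₗ[𝕜] E) ≤ LinearMap.ker (s : E →ₗ[𝕜] E) ↔
      s * w * (1 - v * s) = 0 := by
  have hsv : ∀ x, s (v x) = x := fun x => by simpa using congr($hs x)
  constructor
  · intro h
    ext x
    exact h ⟨_, by simp [hsv], rfl⟩
  · rintro h _ ⟨y, hy : s y = 0, rfl⟩
    simpa [hy] using congr($h y)

open ContinuousLinearMap

theorem stmt8_general {H : Type*} [NormedAddCommGroup H] [InnerProductSpace ℂ H] [CompleteSpace H]
    (V₁ V₂ : H →L[ℂ] H)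
    (hV₁ : adjoint V₁ ∘L V₁ = 1) (hV₂ : adjoint V₂ ∘L V₂ = 1)
    (hcomm : V₁ ∘L V₂ = V₂ ∘L V₁)
    (C F₂ : H →L[ℂ] H)
    (hC : C = 1 - V₁ ∘L adjoint V₁ - V₂ ∘L adjoint V₂
        + (V₁ ∘L V₂) ∘L adjoint (V₁ ∘L V₂))
    (hF₂ : F₂ = (1 - V₁ ∘L adjoint V₁) ∘L (V₂ ∘L (1 - V₁ ∘L adjoint V₁))) :
    List.TFAE
      [C.IsPositive,
       Submodule.map (V₂ : H →ₗ[ℂ] H) (LinearMap.ker (adjoint V₁ : H →ₗ[ℂ] H)) ≤ LinearMap.ker (adjoint V₁ : H →ₗ[ℂ] H),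
       adjoint V₁ ∘L V₂ = V₂ ∘L adjoint V₁,
       IsSelfAdjoint C ∧ C ∘L C = C,
       adjoint F₂ ∘L F₂ = 1 - V₁ ∘L adjoint V₁] := by
  simp only [← star_eq_adjoint, ← mul_def] at *
  obtain rfl : C = jointDefect V₁ V₂ := hC
  obtain rfl : F₂ = fringe V₁ V₂ := hF₂
  tfae_have 1 → 3 := fun hC =>
    star_mul_eq_mul_star_of_nonneg_jointDefect hV₁ hcomm ((nonneg_iff_isPositive _).2 hC)
  tfae_have 3 → 4 := fun hd =>
    let hP := isStarProjection_jointDefect hV₁ hV₂ hcomm hd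
    ⟨hP.isSelfAdjoint, hP.isIdempotentElem⟩
  tfae_have 4 → 1 := fun ⟨hsa, hidem⟩ =>
    (nonneg_iff_isPositive _).1 (IsStarProjection.nonneg ⟨hidem, hsa⟩)
  tfae_have 3 ↔ 5 := (star_fringe_mul_fringe_eq_iff hV₁ hV₂ hcomm).symm
  tfae_have 2 ↔ 3 := by
    rw [map_ker_le_ker_iff hV₁, star_mul_mul_one_sub_mul_star hV₁ hcomm, sub_eq_zero]
  tfae_finish

/-- Let `V₁, V₂` be commuting isometries on a complex Hilbert space such that
`V := V₁V₂` is pure, `C := I − V₁V₁* − V₂V₂* + VV*`, `W₁ := ker V₁*`, and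
`F₂ := P_{W₁}V₂P_{W₁}`. Then the following are equivalent: (i) `C ≥ 0`; (ii) `V₂(W₁) ⊆ W₁`;
(iii) `V₁*V₂ = V₂V₁*`; (iv) `C` is an orthogonal projection; (v) `F₂*F₂ = P_{W₁}`. -/
theorem stmt8 {H : Type*} [NormedAddCommGroup H] [InnerProductSpace ℂ H] [CompleteSpace H]
    (V₁ V₂ : H →L[ℂ] H)
    (hV₁ : adjoint V₁ ∘L V₁ = 1) (hV₂ : adjoint V₂ ∘L V₂ = 1)
    (hcomm : V₁ ∘L V₂ = V₂ ∘L V₁)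
    (hpure : ∀ h : H, Filter.Tendsto
      (fun n : ℕ => ‖((adjoint (V₁ ∘L V₂)) ^ n) h‖) Filter.atTop (nhds 0))
    (C F₂ : H →L[ℂ] H)
    (hC : C = 1 - V₁ ∘L adjoint V₁ - V₂ ∘L adjoint V₂
        + (V₁ ∘L V₂) ∘L adjoint (V₁ ∘L V₂))
    (hF₂ : F₂ = (1 - V₁ ∘L adjoint V₁) ∘L (V₂ ∘L (1 - V₁ ∘L adjoint V₁))) :
    List.TFAE
      [C.IsPositive,
       Submodule.map (V₂ : H →ₗ[ℂ] H) (LinearMap.ker (adjoint V₁ : H →ₗ[ℂ] H)) ≤ LinearMap.ker (adjoint V₁ : H →ₗ[ℂ] H),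
       adjoint V₁ ∘L V₂ = V₂ ∘L adjoint V₁,
       IsSelfAdjoint C ∧ C ∘L C = C,
       adjoint F₂ ∘L F₂ = 1 - V₁ ∘L adjoint V₁] :=
  stmt8_general V₁ V₂ hV₁ hV₂ hcomm C F₂ hC hF₂
end

section
/- Let V₁ and V₂ be commuting isometries on a complex Hilbert space H, V := V₁V₂, C := I − V₁V₁* − V₂V₂* + VV*, W := ker V*, W₁ := ker V₁*, W₂ := ker V₂*. Then the following conditions are equivalent: (1) C = 0; (2) V₂(W₁) = W₁ (equivalently V₁(W₂) = W₂); (3) the Fringe operators are unitary on the wandering subspaces, i.e., F₂*F₂ = F₂F₂* = P_{W₁} and F₁*F₁ = F₁F₁* = P_{W₂}; (4) W = W₁ ⊕ W₂ as an orthogonal direct sum; (5) H = (ran V₁ ∩ (ran V)ᗮ) ⊕ (ran V₂ ∩ (ran V)ᗮ) ⊕ ran V as an orthogonal direct sum. -/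
open ContinuousLinearMap
open scoped InnerProductSpace

/-!
With `P₁ = V₁V₁*`, `P₂ = V₂V₂*` and `P = VV*`, the joint defect can be written as
`C = P_{W₁} - V₂ P_{W₁} V₂* = P_{W₂} - V₁ P_{W₂} V₁* = P_{W₁} + P_{W₂} - P_W = I - (P₁ + P₂ - P)`,
and every term is an orthogonal projection: `V₂ P_{W₁} V₂*` projects onto `V₂(W₁)`, `P₁ - P` onto
`ran V₁ ⊖ ran V`. Orthogonal projections are determined by their ranges, and a sum of two of them
is again one exactly when their ranges are orthogonal; this turns each of the conditions into
`C = 0`. For the Fringe operator, `F₂*F₂ = P_{W₁} - a*a` with `a = P₁ V₂ P_{W₁}`, so unitarity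
forces `a = 0` by the C*-identity, i.e. `F₂ = V₂ P_{W₁}` and `F₂F₂* = V₂ P_{W₁} V₂*`.
-/

theorem conj_one_sub_mul_star_self {R : Type*} [Ring R] [StarRing R] (v w : R) :
    v * (1 - w * star w) * star v = v * star v - v * w * star (v * w) := by
  rw [star_mul]
  noncomm_ring

theorem mul_mul_star_mul_mul_star_self {R : Type*} [Monoid R] [StarMul R] {v : R}
    (hv : star v * v = 1) (w : R) :
    v * w * star (v * w) * (v * star v) = v * w * star (v * w) := by
  simp only [star_mul, mul_assoc]
  rw [← mul_assoc (star v) v, hv, one_mul]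

namespace IsStarProjection

theorem add_iff_mul_eq_zero {R : Type*} [NonUnitalRing R] [StarRing R] [IsAddTorsionFree R]
    {p q : R} (hp : IsStarProjection p) (hq : IsStarProjection q) :
    IsStarProjection (p + q) ↔ p * q = 0 :=
  ⟨fun h => hp.isIdempotentElem.mul_eq_zero_of_anticommute
      ((hp.isIdempotentElem.add_iff hq.isIdempotentElem).mp h.isIdempotentElem),
    hp.add hq⟩

theorem conj_of_star_mul_self {R : Type*} [Monoid R] [StarMul R] {p v : R}
    (hp : IsStarProjection p) (hv : star v * v = 1) : IsStarProjection (v * p * star v) where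
  isIdempotentElem := calc
    v * p * star v * (v * p * star v) = v * (p * (star v * v) * p) * star v := by
      simp only [mul_assoc]
    _ = v * p * star v := by rw [hv, mul_one, hp.isIdempotentElem.eq]
  isSelfAdjoint := hp.isSelfAdjoint.conjugate v

theorem mul_star_self_of_star_mul_self {R : Type*} [Monoid R] [StarMul R] {v : R}
    (hv : star v * v = 1) : IsStarProjection (v * star v) := by
  simpa using (IsStarProjection.one R).conj_of_star_mul_self hv

theorem compression_unitary_iff {R : Type*} [NormedRing R] [StarRing R] [CStarRing R] {q v : R}
    (hq : IsStarProjection q) (hv : star v * v = 1) :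
    star (q * (v * q)) * (q * (v * q)) = q ∧ q * (v * q) * star (q * (v * q)) = q ↔
      v * q * star v = q := by
  have hqs := hq.isSelfAdjoint.star_eq
  have hqq := hq.isIdempotentElem.eq
  have hvq : star (v * q) * (v * q) = q := by
    rw [star_mul, hqs, mul_assoc, ← mul_assoc (star v), hv, one_mul, hqq]
  have hvq' : v * q * star (v * q) = v * q * star v := by
    rw [star_mul, hqs, ← mul_assoc, mul_assoc v q q, hqq]
  -- `q v* v q` splits along `q + (1 - q) = 1`
  have hsplit : star (q * (v * q)) * (q * (v * q))
      + star ((1 - q) * (v * q)) * ((1 - q) * (v * q)) = q := calc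
    _ = star (v * q) * ((q * q + (1 - q) * (1 - q)) * (v * q)) := by
      simp only [star_mul, hqs, star_sub, star_one, mul_add, add_mul, mul_assoc]
    _ = q := by
      rw [hqq, hq.one_sub.isIdempotentElem.eq, add_sub_cancel, one_mul, hvq]
  constructor
  · rintro ⟨h₁, h₂⟩
    have hoff : (1 - q) * (v * q) = 0 :=
      (CStarRing.star_mul_self_eq_zero_iff _).mp (add_eq_left.mp (h₁ ▸ hsplit))
    rw [sub_mul, one_mul, sub_eq_zero] at hoff
    rwa [← hoff, hvq'] at h₂
  · intro h
    have hcomp : q * (v * q) = v * q := calc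
      q * (v * q) = v * q * star v * (v * q) := by rw [h]
      _ = v * q := by rw [mul_assoc (v * q), ← mul_assoc (star v), hv, one_mul, mul_assoc, hqq]
    rw [hcomp, hvq, hvq', h]
    exact ⟨rfl, rfl⟩

end IsStarProjection

theorem Submodule.sup_eq_top_iff_eq_orthogonal {𝕜 E : Type*} [RCLike 𝕜] [NormedAddCommGroup E]
    [InnerProductSpace 𝕜 E] {A K : Submodule 𝕜 E} [K.HasOrthogonalProjection] (hA : A ≤ Kᗮ) :
    A ⊔ K = ⊤ ↔ A = Kᗮ := by
  constructor
  · intro h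
    calc A = (A ⊔ K) ⊓ Kᗮ := by rw [sup_inf_assoc_of_le _ hA, K.inf_orthogonal_eq_bot, sup_bot_eq]
      _ = Kᗮ := by rw [h, top_inf_eq]
  · rintro rfl
    rw [sup_comm, Submodule.sup_orthogonal_of_hasOrthogonalProjection]

namespace ContinuousLinearMap

variable {𝕜 E : Type*} [RCLike 𝕜] [NormedAddCommGroup E] [InnerProductSpace 𝕜 E] [CompleteSpace E]
  {e f f₁ f₂ p q r v w : E →L[𝕜] E}

namespace IsStarProjection

theorem mul_eq_zero_iff_isOrtho (hp : IsStarProjection p) (hq : IsStarProjection q) :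
    p * q = 0 ↔ p.range ⟂ q.range := by
  obtain ⟨_, hp'⟩ := isStarProjection_iff_eq_starProjection_range.mp hp
  obtain ⟨_, hq'⟩ := isStarProjection_iff_eq_starProjection_range.mp hq
  have := Submodule.starProjection_comp_starProjection_eq_zero_iff (U := p.range) (V := q.range)
  rwa [← hp', ← hq'] at this

theorem range_add (hp : IsStarProjection p) (hq : IsStarProjection q) (hpq : p * q = 0) :
    (p + q).range = p.range ⊔ q.range := by
  have hqp : q * p = 0 := by
    simpa [hp.isSelfAdjoint.star_eq, hq.isSelfAdjoint.star_eq] using congr(star $hpq)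
  refine le_antisymm (by rw [toLinearMap_add]; exact LinearMap.range_add_le _ _) (sup_le ?_ ?_)
  · calc p.range = ((p + q) * p).range := by rw [add_mul, hp.isIdempotentElem.eq, hqp, add_zero]
      _ ≤ (p + q).range := LinearMap.range_comp_le_range _ _
  · calc q.range = ((p + q) * q).range := by rw [add_mul, hq.isIdempotentElem.eq, hpq, zero_add]
      _ ≤ (p + q).range := LinearMap.range_comp_le_range _ _

theorem add_eq_iff (hp : IsStarProjection p) (hq : IsStarProjection q)
    (hr : IsStarProjection r) :
    p + q = r ↔ r.range = p.range ⊔ q.range ∧ p.range ⟂ q.range := by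
  have : IsAddTorsionFree (E →L[𝕜] E) := .of_isTorsionFree 𝕜 _
  rw [← mul_eq_zero_iff_isOrtho hp hq]
  constructor
  · rintro rfl
    have hpq := (hp.add_iff_mul_eq_zero hq).mp hr
    exact ⟨range_add hp hq hpq, hpq⟩
  · rintro ⟨hrange, hpq⟩
    exact (ContinuousLinearMap.IsStarProjection.ext_iff (hp.add hq hpq) hr).mpr
      (hrange ▸ range_add hp hq hpq)

theorem range_one_sub (hp : IsStarProjection p) : (1 - p).range = p.rangeᗮ := by
  obtain ⟨_, hp'⟩ := isStarProjection_iff_eq_starProjection_range.mp hp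
  conv_lhs => rw [hp']
  rw [← Submodule.starProjection_orthogonal', Submodule.range_starProjection]

theorem range_sub (he : IsStarProjection e) (hf : IsStarProjection f) (hef : e * f = e) :
    (f - e).range = f.range ⊓ e.rangeᗮ := by
  obtain ⟨hrange, hortho⟩ :=
    (add_eq_iff (he.sub_of_mul_eq_left hf hef) he hf).mp (sub_add_cancel f e)
  rw [hrange, sup_inf_assoc_of_le _ hortho.le, Submodule.inf_orthogonal_eq_bot, sup_bot_eq]

theorem add_sub_eq_one_iff (he : IsStarProjection e) (hf₁ : IsStarProjection f₁)
    (hf₂ : IsStarProjection f₂) (h₁ : e * f₁ = e) (h₂ : e * f₂ = e) :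
    f₁ + f₂ - e = 1 ↔ (f₁.range ⊓ e.rangeᗮ) ⊔ (f₂.range ⊓ e.rangeᗮ) ⊔ e.range = ⊤ ∧
      (f₁.range ⊓ e.rangeᗮ) ⟂ (f₂.range ⊓ e.rangeᗮ) := by
  -- provides the instance `e.range.HasOrthogonalProjection`
  obtain ⟨_, -⟩ := isStarProjection_iff_eq_starProjection_range.mp he
  have hregroup : f₁ + f₂ - e = 1 ↔ (f₁ - e) + (f₂ - e) = 1 - e := by
    rw [← sub_eq_zero, iff_comm, ← sub_eq_zero]
    abel_nf
  rw [hregroup, add_eq_iff (he.sub_of_mul_eq_left hf₁ h₁) (he.sub_of_mul_eq_left hf₂ h₂) he.one_sub,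
    range_one_sub he, range_sub he hf₁ h₁, range_sub he hf₂ h₂,
    Submodule.sup_eq_top_iff_eq_orthogonal (sup_le inf_le_right inf_le_right), eq_comm]

end IsStarProjection

theorem range_conj_of_star_mul_self (hv : star v * v = 1) (p : E →L[𝕜] E) :
    (v * p * star v).range = p.range.map (v : E →ₗ[𝕜] E) := by
  have hsurj : (star v).range = ⊤ :=
    LinearMap.range_eq_top.mpr fun x => ⟨v x, by simpa using congr($hv x)⟩
  rw [toLinearMap_mul, toLinearMap_mul, Module.End.mul_eq_comp, Module.End.mul_eq_comp,
    LinearMap.range_comp, hsurj, Submodule.map_top, LinearMap.range_comp]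

theorem range_mul_star_self (hv : star v * v = 1) : (v * star v).range = v.range := by
  simpa [Module.End.one_eq_id, LinearMap.range_id] using range_conj_of_star_mul_self hv 1

theorem range_one_sub_mul_star_self (hv : star v * v = 1) :
    (1 - v * star v).range = (star v).ker := by
  rw [IsStarProjection.range_one_sub (.mul_star_self_of_star_mul_self hv), range_mul_star_self hv,
    orthogonal_range, star_eq_adjoint]

theorem map_ker_star_eq_iff (hv : star v * v = 1) (hw : star w * w = 1) :
    (star w).ker.map (v : E →ₗ[𝕜] E) = (star w).ker ↔
      v * (1 - w * star w) * star v = 1 - w * star w := by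
  have hq := (IsStarProjection.mul_star_self_of_star_mul_self hw).one_sub
  rw [IsStarProjection.ext_iff (hq.conj_of_star_mul_self hv) hq, range_conj_of_star_mul_self hv,
    range_one_sub_mul_star_self hw]

end ContinuousLinearMap

/-- Let `V₁, V₂` be commuting isometries on a complex Hilbert space,
`V := V₁V₂`, `C := I − V₁V₁* − V₂V₂* + VV*`, `W := ker V*`, `W₁ := ker V₁*`,
`W₂ := ker V₂*`, with Fringe operators `F₁ := P_{W₂}V₁P_{W₂}`, `F₂ := P_{W₁}V₂P_{W₁}`.
The following are equivalent: (1) `C = 0`; (2) `V₂(W₁) = W₁` (equivalently `V₁(W₂) = W₂`);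
(3) the Fringe operators are unitary on the wandering subspaces; (4) `W = W₁ ⊕ W₂`
orthogonally; (5) `H = (ran V₁ ⊖ ran V) ⊕ (ran V₂ ⊖ ran V) ⊕ ran V` orthogonally. -/
theorem stmt10 {H : Type*} [NormedAddCommGroup H] [InnerProductSpace ℂ H] [CompleteSpace H]
    (V₁ V₂ : H →L[ℂ] H)
    (hV₁ : adjoint V₁ ∘L V₁ = 1) (hV₂ : adjoint V₂ ∘L V₂ = 1)
    (hcomm : V₁ ∘L V₂ = V₂ ∘L V₁)
    (C F₁ F₂ : H →L[ℂ] H)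
    (hC : C = 1 - V₁ ∘L adjoint V₁ - V₂ ∘L adjoint V₂
        + (V₁ ∘L V₂) ∘L adjoint (V₁ ∘L V₂))
    (hF₁ : F₁ = (1 - V₂ ∘L adjoint V₂) ∘L (V₁ ∘L (1 - V₂ ∘L adjoint V₂)))
    (hF₂ : F₂ = (1 - V₁ ∘L adjoint V₁) ∘L (V₂ ∘L (1 - V₁ ∘L adjoint V₁))) :
    List.TFAE
      [C = 0,
       Submodule.map (V₂ : H →ₗ[ℂ] H) (LinearMap.ker (adjoint V₁ : H →ₗ[ℂ] H)) = LinearMap.ker (adjoint V₁ : H →ₗ[ℂ] H),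
       Submodule.map (V₁ : H →ₗ[ℂ] H) (LinearMap.ker (adjoint V₂ : H →ₗ[ℂ] H)) = LinearMap.ker (adjoint V₂ : H →ₗ[ℂ] H),
       adjoint F₂ ∘L F₂ = 1 - V₁ ∘L adjoint V₁ ∧
         F₂ ∘L adjoint F₂ = 1 - V₁ ∘L adjoint V₁ ∧
         adjoint F₁ ∘L F₁ = 1 - V₂ ∘L adjoint V₂ ∧
         F₁ ∘L adjoint F₁ = 1 - V₂ ∘L adjoint V₂,
       LinearMap.ker (adjoint (V₁ ∘L V₂) : H →ₗ[ℂ] H) =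
           LinearMap.ker (adjoint V₁ : H →ₗ[ℂ] H) ⊔ LinearMap.ker (adjoint V₂ : H →ₗ[ℂ] H) ∧
         (∀ x ∈ LinearMap.ker (adjoint V₁ : H →ₗ[ℂ] H), ∀ y ∈ LinearMap.ker (adjoint V₂ : H →ₗ[ℂ] H),
           ⟪x, y⟫_ℂ = 0),
       (LinearMap.range (V₁ : H →ₗ[ℂ] H) ⊓ (LinearMap.range ((V₁ ∘L V₂ : H →L[ℂ] H) : H →ₗ[ℂ] H))ᗮ) ⊔
           (LinearMap.range (V₂ : H →ₗ[ℂ] H) ⊓ (LinearMap.range ((V₁ ∘L V₂ : H →L[ℂ] H) : H →ₗ[ℂ] H))ᗮ) ⊔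
           LinearMap.range ((V₁ ∘L V₂ : H →L[ℂ] H) : H →ₗ[ℂ] H) = ⊤ ∧
         (∀ x ∈ LinearMap.range (V₁ : H →ₗ[ℂ] H) ⊓ (LinearMap.range ((V₁ ∘L V₂ : H →L[ℂ] H) : H →ₗ[ℂ] H))ᗮ,
           ∀ y ∈ LinearMap.range (V₂ : H →ₗ[ℂ] H) ⊓ (LinearMap.range ((V₁ ∘L V₂ : H →L[ℂ] H) : H →ₗ[ℂ] H))ᗮ, ⟪x, y⟫_ℂ = 0) ∧
         (∀ x ∈ LinearMap.range (V₁ : H →ₗ[ℂ] H) ⊓ (LinearMap.range ((V₁ ∘L V₂ : H →L[ℂ] H) : H →ₗ[ℂ] H))ᗮ,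
           ∀ y ∈ LinearMap.range ((V₁ ∘L V₂ : H →L[ℂ] H) : H →ₗ[ℂ] H), ⟪x, y⟫_ℂ = 0) ∧
         (∀ x ∈ LinearMap.range (V₂ : H →ₗ[ℂ] H) ⊓ (LinearMap.range ((V₁ ∘L V₂ : H →L[ℂ] H) : H →ₗ[ℂ] H))ᗮ,
           ∀ y ∈ LinearMap.range ((V₁ ∘L V₂ : H →L[ℂ] H) : H →ₗ[ℂ] H), ⟪x, y⟫_ℂ = 0)] := by
  subst hF₁ hF₂
  simp only [← mul_def, ← star_eq_adjoint] at hV₁ hV₂ hcomm hC ⊢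
  have hV : star (V₁ * V₂) * (V₁ * V₂) = 1 := by
    rw [star_mul, mul_assoc, ← mul_assoc (star V₁), hV₁, one_mul, hV₂]
  have hP₁ := IsStarProjection.mul_star_self_of_star_mul_self hV₁
  have hP₂ := IsStarProjection.mul_star_self_of_star_mul_self hV₂
  have hP := IsStarProjection.mul_star_self_of_star_mul_self hV
  have hC₂ : C = 0 ↔ V₂ * (1 - V₁ * star V₁) * star V₂ = 1 - V₁ * star V₁ := by
    rw [show C = (1 - V₁ * star V₁) - V₂ * (1 - V₁ * star V₁) * star V₂ by
      rw [conj_one_sub_mul_star_self, ← hcomm, hC]; abel, sub_eq_zero, eq_comm]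
  have hC₃ : C = 0 ↔ V₁ * (1 - V₂ * star V₂) * star V₁ = 1 - V₂ * star V₂ := by
    rw [show C = (1 - V₂ * star V₂) - V₁ * (1 - V₂ * star V₂) * star V₁ by
      rw [conj_one_sub_mul_star_self, hC]; abel, sub_eq_zero, eq_comm]
  tfae_have 1 ↔ 2 := by rw [hC₂, map_ker_star_eq_iff hV₂ hV₁]
  tfae_have 1 ↔ 3 := by rw [hC₃, map_ker_star_eq_iff hV₁ hV₂]
  tfae_have 1 ↔ 4 := by
    rw [← and_assoc, hP₁.one_sub.compression_unitary_iff hV₂,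
      hP₂.one_sub.compression_unitary_iff hV₁, ← hC₂, ← hC₃, and_self]
  tfae_have 1 ↔ 5 := by
    rw [show C = (1 - V₁ * star V₁) + (1 - V₂ * star V₂) - (1 - V₁ * V₂ * star (V₁ * V₂)) by
      rw [hC]; abel, sub_eq_zero, IsStarProjection.add_eq_iff hP₁.one_sub hP₂.one_sub hP.one_sub,
      range_one_sub_mul_star_self hV₁, range_one_sub_mul_star_self hV₂,
      range_one_sub_mul_star_self hV, Submodule.isOrtho_iff_inner_eq]
  tfae_have 1 ↔ 6 := by
    rw [show C = 1 - (V₁ * star V₁ + V₂ * star V₂ - V₁ * V₂ * star (V₁ * V₂)) by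
      rw [hC]; abel, sub_eq_zero, eq_comm, IsStarProjection.add_sub_eq_one_iff hP hP₁ hP₂
      (mul_mul_star_mul_mul_star_self hV₁ V₂) (hcomm ▸ mul_mul_star_mul_mul_star_self hV₂ V₁),
      range_mul_star_self hV₁, range_mul_star_self hV₂, range_mul_star_self hV,
      Submodule.isOrtho_iff_inner_eq]
    have hortho (K : Submodule ℂ H) : ∀ x ∈ K ⊓ (V₁ * V₂).rangeᗮ, ∀ y ∈ (V₁ * V₂).range,
        ⟪x, y⟫_ℂ = 0 := fun x hx y hy => Submodule.inner_left_of_mem_orthogonal hy hx.2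
    exact and_congr_right fun _ => (and_iff_left ⟨hortho _, hortho _⟩).symm
  tfae_finish
end

section
/- Let V₁ and V₂ be commuting isometries on a complex Hilbert space H, V := V₁V₂, C := I − V₁V₁* − V₂V₂* + VV*, W := ker V*, W₁ := ker V₁*, W₂ := ker V₂*. Then the following conditions are equivalent: (1) C ≤ 0 and C ≠ 0; (2) W₁ ⊊ V₂(W₁) (strict inclusion); (3) the Fringe operator F₂ is co-isometric but not unitary on W₁, i.e., F₂F₂* = P_{W₁} but F₂*F₂ ≠ P_{W₁}; (4) W₁ ⊥ W₂ and W ≠ W₁ ⊕ W₂; (5) −C is a nonzero orthogonal projection. -/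
open ContinuousLinearMap
open scoped InnerProductSpace

set_option maxHeartbeats 1000000

section Stmt11Aux

variable {H : Type*} [NormedAddCommGroup H] [InnerProductSpace ℂ H] [CompleteSpace H]

private lemma stmt11_inner_proj_self {p : H →L[ℂ] H} (hpa : adjoint p = p)
    (hp2 : p * p = p) (x : H) : ⟪p x, x⟫_ℂ = ⟪p x, p x⟫_ℂ := by
  have h2 : p (p x) = p x := by rw [← ContinuousLinearMap.mul_apply, hp2]
  have h1 := ContinuousLinearMap.adjoint_inner_left p x (p x)
  rw [hpa, h2] at h1
  exact h1

private lemma stmt11_re_inner_proj {p : H →L[ℂ] H} (hpa : adjoint p = p)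
    (hp2 : p * p = p) (x : H) : RCLike.re ⟪p x, x⟫_ℂ = ‖p x‖ ^ 2 := by
  rw [stmt11_inner_proj_self hpa hp2, inner_self_eq_norm_sq]

private lemma stmt11_norm_proj_apply_le {p : H →L[ℂ] H} (hpa : adjoint p = p)
    (hp2 : p * p = p) (x : H) : ‖p x‖ ≤ ‖x‖ := by
  have h1 : ‖p x‖ ^ 2 = RCLike.re ⟪p x, x⟫_ℂ := (stmt11_re_inner_proj hpa hp2 x).symm
  have h2 : RCLike.re ⟪p x, x⟫_ℂ ≤ ‖p x‖ * ‖x‖ := by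
    calc RCLike.re ⟪p x, x⟫_ℂ ≤ |RCLike.re ⟪p x, x⟫_ℂ| := le_abs_self _
    _ ≤ ‖⟪p x, x⟫_ℂ‖ := RCLike.abs_re_le_norm _
    _ ≤ ‖p x‖ * ‖x‖ := norm_inner_le_norm _ _
  nlinarith [norm_nonneg (p x), norm_nonneg x]

private lemma stmt11_eq_zero_of_adj_mul_self {T : H →L[ℂ] H}
    (h : adjoint T * T = 0) : T = 0 := by
  have h1 := ContinuousLinearMap.norm_adjoint_comp_self T
  have h2 : adjoint T ∘L T = 0 := h
  rw [h2, norm_zero] at h1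
  have h3 : ‖T‖ = 0 := mul_self_eq_zero.mp h1.symm
  exact norm_eq_zero.mp h3

private lemma stmt11_proj_cancel {q r : H →L[ℂ] H} (hqa : adjoint q = q) (hq2 : q * q = q)
    (hra : adjoint r = r) (hr2 : r * r = r) (h : q * (r * q) = q) : r * q = q := by
  have adj_sub : ∀ f g : H →L[ℂ] H, adjoint (f - g) = adjoint f - adjoint g := fun f g => by
    rw [← star_eq_adjoint, star_sub, star_eq_adjoint, star_eq_adjoint]
  have adj_mul : ∀ f g : H →L[ℂ] H, adjoint (f * g) = adjoint g * adjoint f := fun f g => by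
    rw [← star_eq_adjoint, star_mul, star_eq_adjoint, star_eq_adjoint]
  have adj_one : adjoint (1 : H →L[ℂ] H) = 1 := by rw [← star_eq_adjoint, star_one]
  have ha : adjoint ((1 - r) * q) = q * (1 - r) := by
    rw [adj_mul, hqa, adj_sub, adj_one, hra]
  have h2 : adjoint ((1 - r) * q) * ((1 - r) * q) = 0 := by
    rw [ha]
    have e1 : q * (1 - r) * ((1 - r) * q) = q * q - q * (r * q) - q * (r * q) + q * (r * (r * q)) := by
      noncomm_ring
    have e2 : r * (r * q) = r * q := by rw [← mul_assoc, hr2]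
    rw [e1, e2, hq2, h]
    abel
  have hT0 := stmt11_eq_zero_of_adj_mul_self h2
  have : q - r * q = 0 := by
    have e : (1 - r) * q = q - r * q := by rw [sub_mul, one_mul]
    rwa [e] at hT0
  have := sub_eq_zero.mp this
  exact this.symm

end Stmt11Aux

/-- Let `V₁, V₂` be commuting isometries on a complex Hilbert space,
`V := V₁V₂`, `C := I − V₁V₁* − V₂V₂* + VV*`, `W := ker V*`, `W₁ := ker V₁*`,
`W₂ := ker V₂*`, `F₂ := P_{W₁}V₂P_{W₁}`. The following are equivalent:
(1) `C ≤ 0` and `C ≠ 0`; (2) `W₁ ⊊ V₂(W₁)`; (3) `F₂` is co-isometric but not unitary on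
`W₁`; (4) `W₁ ⊥ W₂` and `W ≠ W₁ ⊕ W₂`; (5) `−C` is a nonzero orthogonal projection. -/
theorem stmt11 {H : Type*} [NormedAddCommGroup H] [InnerProductSpace ℂ H] [CompleteSpace H]
    (V₁ V₂ : H →L[ℂ] H)
    (hV₁ : adjoint V₁ ∘L V₁ = 1) (hV₂ : adjoint V₂ ∘L V₂ = 1)
    (hcomm : V₁ ∘L V₂ = V₂ ∘L V₁)
    (C F₂ : H →L[ℂ] H)
    (hC : C = 1 - V₁ ∘L adjoint V₁ - V₂ ∘L adjoint V₂
        + (V₁ ∘L V₂) ∘L adjoint (V₁ ∘L V₂))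
    (hF₂ : F₂ = (1 - V₁ ∘L adjoint V₁) ∘L (V₂ ∘L (1 - V₁ ∘L adjoint V₁))) :
    List.TFAE
      [(-C).IsPositive ∧ C ≠ 0,
       LinearMap.ker (adjoint V₁ : H →ₗ[ℂ] H) < Submodule.map (V₂ : H →ₗ[ℂ] H) (LinearMap.ker (adjoint V₁ : H →ₗ[ℂ] H)),
       F₂ ∘L adjoint F₂ = 1 - V₁ ∘L adjoint V₁ ∧
         adjoint F₂ ∘L F₂ ≠ 1 - V₁ ∘L adjoint V₁,
       (∀ x ∈ LinearMap.ker (adjoint V₁ : H →ₗ[ℂ] H), ∀ y ∈ LinearMap.ker (adjoint V₂ : H →ₗ[ℂ] H),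
           ⟪x, y⟫_ℂ = 0) ∧
         LinearMap.ker (adjoint (V₁ ∘L V₂) : H →ₗ[ℂ] H) ≠
           LinearMap.ker (adjoint V₁ : H →ₗ[ℂ] H) ⊔ LinearMap.ker (adjoint V₂ : H →ₗ[ℂ] H),
       IsSelfAdjoint (-C) ∧ (-C) ∘L (-C) = -C ∧ C ≠ 0] := by
  simp only [← ContinuousLinearMap.mul_def] at hV₁ hV₂ hcomm hC hF₂ ⊢
  set a₁ := adjoint V₁ with ha₁
  set a₂ := adjoint V₂ with ha₂
  set q : H →L[ℂ] H := 1 - V₁ * a₁ with hqdef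
  set q₂ : H →L[ℂ] H := 1 - V₂ * a₂ with hq₂def
  set r : H →L[ℂ] H := V₂ * q * a₂ with hrdef
  clear_value a₁ a₂ q q₂ r
  -- basic adjoint helpers
  have adj_mul : ∀ f g : H →L[ℂ] H, adjoint (f * g) = adjoint g * adjoint f := fun f g => by
    rw [← star_eq_adjoint, star_mul, star_eq_adjoint, star_eq_adjoint]
  have adj_sub : ∀ f g : H →L[ℂ] H, adjoint (f - g) = adjoint f - adjoint g := fun f g => by
    rw [← star_eq_adjoint, star_sub, star_eq_adjoint, star_eq_adjoint]
  have adj_one : adjoint (1 : H →L[ℂ] H) = 1 := by rw [← star_eq_adjoint, star_one]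
  -- basic algebraic facts
  have hA : a₁ * a₂ = a₂ * a₁ := by
    rw [ha₁, ha₂, ← adj_mul, ← adj_mul, hcomm]
  have hqa : adjoint q = q := by
    rw [hqdef, adj_sub, adj_one, adj_mul, ha₁, adjoint_adjoint, ← ha₁]
  have hq2 : q * q = q := by
    have hx : V₁ * a₁ * (V₁ * a₁) = V₁ * a₁ := by
      rw [mul_assoc, ← mul_assoc a₁, hV₁, one_mul]
    have : (1 - V₁ * a₁) * (1 - V₁ * a₁) = 1 - V₁ * a₁ - V₁ * a₁ + V₁ * a₁ * (V₁ * a₁) := by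
      noncomm_ring
    rw [hqdef, this, hx]; abel
  have ha₁q : a₁ * q = 0 := by
    rw [hqdef, mul_sub, mul_one, ← mul_assoc, hV₁, one_mul, sub_self]
  have hq₂a : adjoint q₂ = q₂ := by
    rw [hq₂def, adj_sub, adj_one, adj_mul, ha₂, adjoint_adjoint, ← ha₂]
  have hq₂2 : q₂ * q₂ = q₂ := by
    have hx : V₂ * a₂ * (V₂ * a₂) = V₂ * a₂ := by
      rw [mul_assoc, ← mul_assoc a₂, hV₂, one_mul]
    have : (1 - V₂ * a₂) * (1 - V₂ * a₂) = 1 - V₂ * a₂ - V₂ * a₂ + V₂ * a₂ * (V₂ * a₂) := by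
      noncomm_ring
    rw [hq₂def, this, hx]; abel
  have ha₂q₂ : a₂ * q₂ = 0 := by
    rw [hq₂def, mul_sub, mul_one, ← mul_assoc, hV₂, one_mul, sub_self]
  have hra : adjoint r = r := by
    rw [hrdef, adj_mul, adj_mul, hqa, ha₂, adjoint_adjoint, ← ha₂]
    rw [mul_assoc]
  have hr2 : r * r = r := by
    rw [hrdef]
    simp only [mul_assoc]
    rw [← mul_assoc a₂ V₂, hV₂, one_mul, ← mul_assoc q q, hq2]
  -- r * q = (V₂ * a₂) * q
  have hkey : a₁ * (a₂ * q) = 0 := by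
    rw [← mul_assoc, hA, mul_assoc, ha₁q, mul_zero]
  have hqa₂q : q * (a₂ * q) = a₂ * q := by
    have e : q * (a₂ * q) = a₂ * q - V₁ * (a₁ * (a₂ * q)) := by
      rw [hqdef]; noncomm_ring
    rw [e, hkey, mul_zero, sub_zero]
  have hrq : r * q = V₂ * a₂ * q := by
    rw [hrdef]
    simp only [mul_assoc]
    rw [hqa₂q]
  -- C = q - r
  have hadj12 : adjoint (V₁ * V₂) = a₂ * a₁ := by
    rw [adj_mul, ← ha₁, ← ha₂]
  have hCqr : C = q - r := by
    have h1 : V₂ * V₁ * (a₂ * a₁) = V₂ * ((V₁ * a₁) * a₂) := by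
      rw [← hA]; noncomm_ring
    rw [hC, hadj12, hcomm, h1, hrdef, hqdef]
    noncomm_ring
  have hCsa : adjoint C = C := by rw [hCqr, adj_sub, hqa, hra]
  have hnC : -C = r - q := by rw [hCqr, neg_sub]
  -- membership characterizations
  have memq : ∀ x : H, x ∈ LinearMap.ker (a₁ : H →ₗ[ℂ] H) ↔ q x = x := by
    intro x
    rw [LinearMap.mem_ker, ContinuousLinearMap.coe_coe]
    constructor
    · intro hx
      rw [hqdef]
      simp [ContinuousLinearMap.sub_apply, ContinuousLinearMap.mul_apply, hx]
    · intro hx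
      rw [hqdef] at hx
      simp only [ContinuousLinearMap.sub_apply, ContinuousLinearMap.one_apply,
        ContinuousLinearMap.mul_apply, sub_eq_self] at hx
      have h2 := congrArg a₁ hx
      rw [map_zero, ← ContinuousLinearMap.mul_apply, hV₁, ContinuousLinearMap.one_apply] at h2
      exact h2
  have memq₂ : ∀ x : H, x ∈ LinearMap.ker (a₂ : H →ₗ[ℂ] H) ↔ q₂ x = x := by
    intro x
    rw [LinearMap.mem_ker, ContinuousLinearMap.coe_coe]
    constructor
    · intro hx
      rw [hq₂def]
      simp [ContinuousLinearMap.sub_apply, ContinuousLinearMap.mul_apply, hx]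
    · intro hx
      rw [hq₂def] at hx
      simp only [ContinuousLinearMap.sub_apply, ContinuousLinearMap.one_apply,
        ContinuousLinearMap.mul_apply, sub_eq_self] at hx
      have h2 := congrArg a₂ hx
      rw [map_zero, ← ContinuousLinearMap.mul_apply, hV₂, ContinuousLinearMap.one_apply] at h2
      exact h2
  have memr : ∀ x : H, x ∈ Submodule.map (V₂ : H →ₗ[ℂ] H) (LinearMap.ker (a₁ : H →ₗ[ℂ] H)) ↔ r x = x := by
    intro x
    constructor
    · intro hx
      obtain ⟨w, hw, rfl⟩ := Submodule.mem_map.mp hx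
      rw [ContinuousLinearMap.coe_coe]
      have h1 : a₂ (V₂ w) = w := by
        rw [← ContinuousLinearMap.mul_apply, hV₂, ContinuousLinearMap.one_apply]
      have h2 : q w = w := (memq w).mp hw
      rw [hrdef]
      simp only [ContinuousLinearMap.mul_apply, h1, h2]
    · intro h
      refine Submodule.mem_map.mpr ⟨q (a₂ x), ?_, ?_⟩
      · refine (memq _).mpr ?_
        rw [← ContinuousLinearMap.mul_apply, hq2]
      · have : r x = V₂ (q (a₂ x)) := by
          rw [hrdef]; simp only [ContinuousLinearMap.mul_apply]
        rw [ContinuousLinearMap.coe_coe, ← this, h]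
  -- inclusion characterizations
  have k2 : LinearMap.ker (a₁ : H →ₗ[ℂ] H) ≤ Submodule.map (V₂ : H →ₗ[ℂ] H) (LinearMap.ker (a₁ : H →ₗ[ℂ] H)) ↔ r * q = q := by
    constructor
    · intro h
      apply ContinuousLinearMap.ext
      intro x
      rw [ContinuousLinearMap.mul_apply]
      have h1 : q x ∈ LinearMap.ker (a₁ : H →ₗ[ℂ] H) := (memq _).mpr (by rw [← ContinuousLinearMap.mul_apply, hq2])
      exact (memr _).mp (h h1)
    · intro h x hx
      have h1 := (memq x).mp hx
      refine (memr x).mpr ?_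
      calc r x = r (q x) := by rw [h1]
        _ = (r * q) x := (ContinuousLinearMap.mul_apply r q x).symm
        _ = q x := by rw [h]
        _ = x := h1
  have k2' : Submodule.map (V₂ : H →ₗ[ℂ] H) (LinearMap.ker (a₁ : H →ₗ[ℂ] H)) ≤ LinearMap.ker (a₁ : H →ₗ[ℂ] H) ↔ q * r = r := by
    constructor
    · intro h
      apply ContinuousLinearMap.ext
      intro x
      rw [ContinuousLinearMap.mul_apply]
      have h1 : r x ∈ Submodule.map (V₂ : H →ₗ[ℂ] H) (LinearMap.ker (a₁ : H →ₗ[ℂ] H)) :=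
        (memr _).mpr (by rw [← ContinuousLinearMap.mul_apply, hr2])
      exact (memq _).mp (h h1)
    · intro h x hx
      have h1 := (memr x).mp hx
      refine (memq x).mpr ?_
      calc q x = q (r x) := by rw [h1]
        _ = (q * r) x := (ContinuousLinearMap.mul_apply q r x).symm
        _ = r x := by rw [h]
        _ = x := h1
  -- positivity characterization
  have h1ra : adjoint (1 - r) = 1 - r := by rw [adj_sub, adj_one, hra]
  have h1r2 : (1 - r) * (1 - r) = 1 - r := by
    rw [sub_mul, one_mul, mul_sub, mul_one, hr2]
    abel
  have kpos : (r - q).IsPositive ↔ r * q = q := by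
    constructor
    · intro h
      apply ContinuousLinearMap.ext
      intro x
      rw [ContinuousLinearMap.mul_apply]
      have h0 := h.2 (q x)
      rw [ContinuousLinearMap.reApplyInnerSelf_apply] at h0
      have e1 : (r - q) (q x) = r (q x) - q x := by
        rw [ContinuousLinearMap.sub_apply, ← ContinuousLinearMap.mul_apply q q, hq2]
      rw [e1, inner_sub_left, map_sub, stmt11_re_inner_proj hra hr2 (q x),
        inner_self_eq_norm_sq] at h0
      have hle : ‖r (q x)‖ ≤ ‖q x‖ := stmt11_norm_proj_apply_le hra hr2 (q x)
      have heq : ‖(1 - r) (q x)‖ ^ 2 = 0 := by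
        rw [← stmt11_re_inner_proj h1ra h1r2 (q x)]
        have e2 : (1 - r) (q x) = q x - r (q x) := by
          rw [ContinuousLinearMap.sub_apply, ContinuousLinearMap.one_apply]
        rw [e2, inner_sub_left, map_sub, inner_self_eq_norm_sq,
          stmt11_re_inner_proj hra hr2 (q x)]
        nlinarith [norm_nonneg (r (q x)), norm_nonneg (q x)]
      have h3 : (1 - r) (q x) = 0 := by
        have := pow_eq_zero_iff (n := 2) two_ne_zero |>.mp heq
        exact norm_eq_zero.mp this
      have e3 : (1 - r) (q x) = q x - r (q x) := by
        rw [ContinuousLinearMap.sub_apply, ContinuousLinearMap.one_apply]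
      rw [e3] at h3
      have := sub_eq_zero.mp h3
      exact this.symm
    · intro h
      have hqr1 : q * r = q := by
        have := congrArg adjoint h
        rwa [adj_mul, hqa, hra] at this
      constructor
      · refine ContinuousLinearMap.isSelfAdjoint_iff_isSymmetric.mp ?_
        show star (r - q) = r - q
        rw [star_sub, star_eq_adjoint, star_eq_adjoint, hra, hqa]
      · intro x
        rw [ContinuousLinearMap.reApplyInnerSelf_apply, ContinuousLinearMap.sub_apply,
          inner_sub_left, map_sub, stmt11_re_inner_proj hra hr2 x,
          stmt11_re_inner_proj hqa hq2 x]
        have h1 : q x = q (r x) := by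
          show q x = (q * r) x
          rw [hqr1]
        have h2 : ‖q x‖ ≤ ‖r x‖ := by
          rw [h1]; exact stmt11_norm_proj_apply_le hqa hq2 (r x)
        nlinarith [norm_nonneg (q x), norm_nonneg (r x)]
  -- idempotence characterization
  have kidem : (r - q) * (r - q) = r - q ↔ r * q = q := by
    have expand : (r - q) * (r - q) = r * r - r * q - q * r + q * q := by noncomm_ring
    constructor
    · intro h
      rw [expand, hr2, hq2] at h
      have h3 : r * q + q * r = q + q := by
        calc r * q + q * r = r + q - (r - r * q - q * r + q) := by abel
          _ = r + q - (r - q) := by rw [h]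
          _ = q + q := by abel
      have h5 := congrArg (fun t => q * t * q) h3
      have e1 : q * (r * q + q * r) * q = q * (r * q) + q * (r * q) := by
        have e : q * (r * q + q * r) * q = q * r * (q * q) + (q * q) * (r * q) := by noncomm_ring
        rw [e, hq2]
        noncomm_ring
      have e2 : q * (q + q) * q = q + q := by
        have e : q * (q + q) * q = q * q * q + q * q * q := by noncomm_ring
        rw [e, hq2, hq2]
      rw [e1, e2] at h5
      have h6 : (2 : ℂ) • (q * (r * q)) = (2 : ℂ) • q := by
        rw [two_smul, two_smul]; exact h5
      have h7 : q * (r * q) = q := smul_right_injective _ two_ne_zero h6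
      exact stmt11_proj_cancel hqa hq2 hra hr2 h7
    · intro h
      have hqr1 : q * r = q := by
        have := congrArg adjoint h
        rwa [adj_mul, hqa, hra] at this
      rw [expand, hr2, hq2, h, hqr1]
      abel
  -- Fringe operator characterizations
  have hF₂a : adjoint F₂ = q * a₂ * q := by
    rw [hF₂, adj_mul, adj_mul, hqa, ← ha₂]
  have hFF : F₂ * adjoint F₂ = q * (r * q) := by
    rw [hF₂a, hF₂, hrdef]
    simp only [mul_assoc]
    rw [← mul_assoc q q (a₂ * q), hq2]
  have kF : F₂ * adjoint F₂ = q ↔ r * q = q := by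
    constructor
    · intro h
      rw [hFF] at h
      exact stmt11_proj_cancel hqa hq2 hra hr2 h
    · intro h
      rw [hFF, h, hq2]
  have hrV₂ : r * V₂ = V₂ * q := by
    rw [hrdef]
    simp only [mul_assoc]
    rw [hV₂, mul_one]
  have hqvq_iff : q * (V₂ * q) = V₂ * q ↔ q * r = r := by
    constructor
    · intro h
      rw [hrdef, ← mul_assoc q, ← mul_assoc q, mul_assoc q V₂ q, h]
    · intro h
      have := congrArg (fun t => t * V₂) h
      rwa [mul_assoc, hrV₂] at this
  have eF : adjoint F₂ * F₂ = q * a₂ * q * (V₂ * q) := by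
    rw [hF₂a, hF₂]

    have e : q * a₂ * q * (q * (V₂ * q)) = q * a₂ * (q * q) * (V₂ * q) := by noncomm_ring
    rw [e, hq2]
  have kF' : adjoint F₂ * F₂ = q ↔ q * r = r := by
    have hTadj : adjoint (q * (V₂ * q) - V₂ * q) = q * a₂ * q - q * a₂ := by
      rw [adj_sub, adj_mul, adj_mul, hqa, ← ha₂]
    have e1 : (q * a₂ * q - q * a₂) * (q * (V₂ * q) - V₂ * q)
        = q - q * a₂ * q * (V₂ * q) := by
      have expand : (q * a₂ * q - q * a₂) * (q * (V₂ * q) - V₂ * q)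
          = q * a₂ * (q * q) * (V₂ * q) - q * a₂ * q * (V₂ * q)
            - q * a₂ * q * (V₂ * q) + q * (a₂ * V₂) * q := by noncomm_ring
      rw [expand, hq2, hV₂, mul_one, hq2]
      abel
    constructor
    · intro h
      have h0 : adjoint (q * (V₂ * q) - V₂ * q) * (q * (V₂ * q) - V₂ * q) = 0 := by
        rw [hTadj, e1, ← eF, h, sub_self]
      have hT0 := stmt11_eq_zero_of_adj_mul_self h0
      have h1 : q * (V₂ * q) = V₂ * q := by rwa [sub_eq_zero] at hT0
      exact hqvq_iff.mp h1
    · intro h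
      have h1 : q * (V₂ * q) = V₂ * q := hqvq_iff.mpr h
      rw [eF, mul_assoc (q * a₂) q (V₂ * q), h1]
      have e : q * a₂ * (V₂ * q) = q * (a₂ * V₂) * q := by noncomm_ring
      rw [e, hV₂, mul_one, hq2]
  -- orthogonality characterization
  have hq₂q_iff : q₂ * q = 0 ↔ r * q = q := by
    have e : q₂ * q = q - r * q := by rw [hq₂def, sub_mul, one_mul, ← hrq]
    rw [e, sub_eq_zero]
    exact eq_comm
  have korth : (∀ x ∈ LinearMap.ker (a₁ : H →ₗ[ℂ] H), ∀ y ∈ LinearMap.ker (a₂ : H →ₗ[ℂ] H), ⟪x, y⟫_ℂ = 0) ↔ r * q = q := by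
    rw [← hq₂q_iff]
    constructor
    · intro h
      apply ContinuousLinearMap.ext
      intro x
      rw [ContinuousLinearMap.mul_apply, ContinuousLinearMap.zero_apply]
      have hx1 : q x ∈ LinearMap.ker (a₁ : H →ₗ[ℂ] H) :=
        (memq _).mpr (by rw [← ContinuousLinearMap.mul_apply, hq2])
      have hx2 : q₂ (q x) ∈ LinearMap.ker (a₂ : H →ₗ[ℂ] H) :=
        (memq₂ _).mpr (by rw [← ContinuousLinearMap.mul_apply, hq₂2])
      have h0 := h (q x) hx1 (q₂ (q x)) hx2
      have e1 : ⟪q x, q₂ (q x)⟫_ℂ = ⟪q₂ (q x), q x⟫_ℂ := by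
        rw [← ContinuousLinearMap.adjoint_inner_left q₂ (q x) (q x), hq₂a]
      rw [e1, stmt11_inner_proj_self hq₂a hq₂2] at h0
      exact inner_self_eq_zero.mp h0
    · intro h x hx y hy
      have hx' := (memq x).mp hx
      have hy' := (memq₂ y).mp hy
      calc ⟪x, y⟫_ℂ = ⟪q x, q₂ y⟫_ℂ := by rw [hx', hy']
        _ = ⟪q₂ (q x), y⟫_ℂ := by
            rw [← ContinuousLinearMap.adjoint_inner_left q₂ y (q x), hq₂a]
        _ = ⟪(q₂ * q) x, y⟫_ℂ := by rw [ContinuousLinearMap.mul_apply]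
        _ = 0 := by rw [h, ContinuousLinearMap.zero_apply, inner_zero_left]
  -- decomposition of W
  have hop : a₂ * a₁ * V₂ = a₁ := by
    rw [← hA, mul_assoc, hV₂, mul_one]
  have wsup : LinearMap.ker (adjoint (V₁ * V₂) : H →ₗ[ℂ] H)
      = LinearMap.ker (a₂ : H →ₗ[ℂ] H) ⊔ Submodule.map (V₂ : H →ₗ[ℂ] H) (LinearMap.ker (a₁ : H →ₗ[ℂ] H)) := by
    apply le_antisymm
    · intro x hx
      rw [LinearMap.mem_ker, ContinuousLinearMap.coe_coe, hadj12, ContinuousLinearMap.mul_apply] at hx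
      have hx1 : a₁ (a₂ x) = 0 := by
        rw [← ContinuousLinearMap.mul_apply, hA, ContinuousLinearMap.mul_apply, hx]
      refine Submodule.mem_sup.mpr ⟨q₂ x, ?_, V₂ (a₂ x), ?_, ?_⟩
      · rw [LinearMap.mem_ker, ContinuousLinearMap.coe_coe, ← ContinuousLinearMap.mul_apply, ha₂q₂,
          ContinuousLinearMap.zero_apply]
      · exact Submodule.mem_map.mpr ⟨a₂ x, LinearMap.mem_ker.mpr hx1, rfl⟩
      · rw [hq₂def]
        simp [ContinuousLinearMap.sub_apply, ContinuousLinearMap.mul_apply]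
    · apply sup_le
      · intro y hy
        rw [LinearMap.mem_ker, ContinuousLinearMap.coe_coe] at hy ⊢
        rw [hadj12, ← hA, ContinuousLinearMap.mul_apply, hy, map_zero]
      · intro y hy
        obtain ⟨w, hw, rfl⟩ := Submodule.mem_map.mp hy
        simp only [LinearMap.mem_ker, ContinuousLinearMap.coe_coe] at hw ⊢
        rw [hadj12, ← ContinuousLinearMap.mul_apply, hop, hw]
  have kW1 : r * q = q → q * r = r →
      LinearMap.ker (adjoint (V₁ * V₂) : H →ₗ[ℂ] H) = LinearMap.ker (a₁ : H →ₗ[ℂ] H) ⊔ LinearMap.ker (a₂ : H →ₗ[ℂ] H) := by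
    intro h1 h2
    have h3 : r * q = r := by
      have := congrArg adjoint h2
      rwa [adj_mul, hqa, hra] at this
    have hqr : r = q := by rw [← h1, h3]
    have hm : Submodule.map (V₂ : H →ₗ[ℂ] H) (LinearMap.ker (a₁ : H →ₗ[ℂ] H)) = LinearMap.ker (a₁ : H →ₗ[ℂ] H) := by
      ext x
      rw [memr x, memq x, hqr]
    rw [wsup, hm, sup_comm]
  have kW2 : (∀ x ∈ LinearMap.ker (a₁ : H →ₗ[ℂ] H), ∀ y ∈ LinearMap.ker (a₂ : H →ₗ[ℂ] H), ⟪x, y⟫_ℂ = 0) →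
      LinearMap.ker (adjoint (V₁ * V₂) : H →ₗ[ℂ] H) = LinearMap.ker (a₁ : H →ₗ[ℂ] H) ⊔ LinearMap.ker (a₂ : H →ₗ[ℂ] H) →
      q * r = r := by
    intro horth hW
    apply k2'.mp
    intro x hx
    obtain ⟨w, hw, rfl⟩ := Submodule.mem_map.mp hx
    have hxW : V₂ w ∈ LinearMap.ker (a₁ : H →ₗ[ℂ] H) ⊔ LinearMap.ker (a₂ : H →ₗ[ℂ] H) := by
      rw [← hW, wsup]
      exact Submodule.mem_sup_right (Submodule.mem_map.mpr ⟨w, hw, rfl⟩)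
    obtain ⟨a, ha, b, hb, hab⟩ := Submodule.mem_sup.mp hxW
    have hba : ⟪b, a⟫_ℂ = 0 := by
      have h0 := horth a ha b hb
      rw [← inner_conj_symm, h0, map_zero]
    have hbx : ⟪b, V₂ w⟫_ℂ = 0 := by
      rw [← ContinuousLinearMap.adjoint_inner_left, ← ha₂,
        show a₂ b = 0 from LinearMap.mem_ker.mp hb, inner_zero_left]
    have hb0 : b = 0 := by
      have hbb : ⟪b, b⟫_ℂ = 0 := by
        have h4 : ⟪b, a + b⟫_ℂ = 0 := by rw [hab]; exact hbx
        rwa [inner_add_right, hba, zero_add] at h4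
      exact inner_self_eq_zero.mp hbb
    have hVa : V₂ w = a := by rw [← hab, hb0, add_zero]
    rw [ContinuousLinearMap.coe_coe, hVa]
    exact ha
  -- C = 0 characterization (under inclusion)
  have kCz : r * q = q → (C = 0 ↔ q * r = r) := by
    intro h1
    constructor
    · intro h
      rw [hCqr] at h
      have hqr : q = r := sub_eq_zero.mp h
      rw [← hqr, hq2, hqr]
    · intro h2
      have h3 : r * q = r := by
        have := congrArg adjoint h2
        rwa [adj_mul, hqa, hra] at this
      rw [hCqr, ← h1, h3, sub_self]
  -- the five equivalences
  have E1 : ((-C).IsPositive ∧ C ≠ 0) ↔ (r * q = q ∧ q * r ≠ r) := by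
    constructor
    · rintro ⟨hp, hn⟩
      have h1 : r * q = q := kpos.mp (hnC ▸ hp)
      exact ⟨h1, fun h2 => hn ((kCz h1).mpr h2)⟩
    · rintro ⟨h1, h2⟩
      exact ⟨hnC ▸ kpos.mpr h1, fun h => h2 ((kCz h1).mp h)⟩
  have E2 : (LinearMap.ker (a₁ : H →ₗ[ℂ] H) < Submodule.map (V₂ : H →ₗ[ℂ] H) (LinearMap.ker (a₁ : H →ₗ[ℂ] H)))
      ↔ (r * q = q ∧ q * r ≠ r) := by
    rw [lt_iff_le_not_ge]
    exact and_congr k2 (not_congr k2')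
  have E3 : (F₂ * adjoint F₂ = q ∧ adjoint F₂ * F₂ ≠ q) ↔ (r * q = q ∧ q * r ≠ r) :=
    and_congr kF (not_congr kF')
  have E4 : ((∀ x ∈ LinearMap.ker (a₁ : H →ₗ[ℂ] H), ∀ y ∈ LinearMap.ker (a₂ : H →ₗ[ℂ] H), ⟪x, y⟫_ℂ = 0) ∧
      LinearMap.ker (adjoint (V₁ * V₂) : H →ₗ[ℂ] H) ≠ LinearMap.ker (a₁ : H →ₗ[ℂ] H) ⊔ LinearMap.ker (a₂ : H →ₗ[ℂ] H))
      ↔ (r * q = q ∧ q * r ≠ r) := by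
    constructor
    · rintro ⟨ho, hne⟩
      have h1 : r * q = q := korth.mp ho
      exact ⟨h1, fun h2 => hne (kW1 h1 h2)⟩
    · rintro ⟨h1, h2⟩
      have ho := korth.mpr h1
      exact ⟨ho, fun hW => h2 (kW2 ho hW)⟩
  have E5 : (IsSelfAdjoint (-C) ∧ (-C) * (-C) = -C ∧ C ≠ 0) ↔ (r * q = q ∧ q * r ≠ r) := by
    constructor
    · rintro ⟨hsa, hid, hn⟩
      have hid' : (r - q) * (r - q) = r - q := by rw [← hnC]; exact hid
      have h1 : r * q = q := kidem.mp hid'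
      exact ⟨h1, fun h2 => hn ((kCz h1).mpr h2)⟩
    · rintro ⟨h1, h2⟩
      refine ⟨?_, ?_, fun h => h2 ((kCz h1).mp h)⟩
      · show star (-C) = -C
        rw [star_neg, star_eq_adjoint, hCsa]
      · rw [hnC]
        exact kidem.mpr h1
  tfae_have 1 ↔ 2 := E1.trans E2.symm
  tfae_have 1 ↔ 3 := E1.trans E3.symm
  tfae_have 1 ↔ 4 := E1.trans E4.symm
  tfae_have 1 ↔ 5 := E1.trans E5.symm
  tfae_finish
end

section
/- Let V₁ and V₂ be commuting isometries on a complex Hilbert space H, V := V₁V₂, and C := I − V₁V₁* − V₂V₂* + VV*. If λ is a real number with −1 < λ < 1 and λ ≠ 0 such that ker(C − λI) ≠ {0}, then ker(C + λI) ≠ {0}, and moreover the eigenspaces have the same dimension: the ℂ-vector space dimension (Module.rank) of ker(C − λI) equals that of ker(C + λI). -/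
/-!
With `P := 1 - V₁V₁*` and `Q := V₂PV₂*`, both idempotent because `V₁, V₂` are isometries,
commutativity gives `C = P - Q`. For any two idempotents, `B := 1 - P - Q` anticommutes with
`P - Q` and `B² = 1 - (P - Q)²`. Hence `B` maps the `r`-eigenspace of `C` into the
`(-r)`-eigenspace and back, and `B² = 1 - r²` on both, so for `r² ≠ 1` it is an isomorphism
between them.
-/

open ContinuousLinearMap

namespace IsIdempotentElem

variable {R : Type*} [Ring R] {P Q : R}

theorem mul_mul_of_mul_eq_one {V W : R} (hP : IsIdempotentElem P) (hWV : W * V = 1) :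
    IsIdempotentElem (V * P * W) := by
  rw [IsIdempotentElem, show V * P * W * (V * P * W) = V * P * (W * V) * P * W by noncomm_ring,
    hWV, mul_one, mul_assoc V, hP.eq]

theorem sub_mul_one_sub_sub (hP : IsIdempotentElem P) (hQ : IsIdempotentElem Q) :
    (P - Q) * (1 - P - Q) = -((1 - P - Q) * (P - Q)) := by
  noncomm_ring [hP.eq, hQ.eq]

theorem one_sub_sub_mul_self (hP : IsIdempotentElem P) (hQ : IsIdempotentElem Q) :
    (1 - P - Q) * (1 - P - Q) = 1 - (P - Q) * (P - Q) := by
  noncomm_ring [hP.eq, hQ.eq]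

end IsIdempotentElem

theorem one_sub_sub_add_mul_star_eq {R : Type*} [Ring R] [StarMul R] {V₁ V₂ : R}
    (hcomm : V₁ * V₂ = V₂ * V₁) :
    1 - V₁ * star V₁ - V₂ * star V₂ + V₁ * V₂ * star (V₁ * V₂) =
      (1 - V₁ * star V₁) - V₂ * (1 - V₁ * star V₁) * star V₂ := by
  rw [hcomm, star_mul]
  noncomm_ring

namespace Module.End

section CommRing

variable {R M : Type*} [CommRing R] [AddCommGroup M] [Module R M] {C B : End R M} {r : R} {x : M}

theorem apply_mem_eigenspace_neg (hanti : C * B = -(B * C)) (hx : x ∈ C.eigenspace r) :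
    B x ∈ C.eigenspace (-r) := by
  rw [mem_eigenspace_iff] at hx ⊢
  rw [← mul_apply, hanti, LinearMap.neg_apply, mul_apply, hx, map_smul, neg_smul]

theorem apply_apply_of_mem_eigenspace (hsq : B * B = 1 - C * C) (hx : x ∈ C.eigenspace r) :
    B (B x) = (1 - r * r) • x := by
  rw [mem_eigenspace_iff] at hx
  rw [← mul_apply, hsq, LinearMap.sub_apply, one_apply, mul_apply, hx, map_smul, hx, smul_smul,
    sub_smul, one_smul]

end CommRing

def eigenspaceEquivNeg {K M : Type*} [Field K] [AddCommGroup M] [Module K M] {C B : End K M}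
    {r : K} (hanti : C * B = -(B * C)) (hsq : B * B = 1 - C * C)
    (hr : 1 - r * r ≠ 0) : C.eigenspace r ≃ₗ[K] C.eigenspace (-r) :=
  .ofLinearMap (B.restrict fun _ => apply_mem_eigenspace_neg hanti)
    (((1 - r * r)⁻¹ • B).restrict fun x hx => by
      simpa using Submodule.smul_mem _ _ (apply_mem_eigenspace_neg hanti hx))
    (by ext ⟨x, hx⟩; simp [apply_apply_of_mem_eigenspace hsq hx, hr])
    (by ext ⟨x, hx⟩; simp [apply_apply_of_mem_eigenspace hsq hx, hr])

end Module.End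

theorem stmt13_general {H : Type*} [NormedAddCommGroup H] [InnerProductSpace ℂ H] [CompleteSpace H]
    (V₁ V₂ : H →L[ℂ] H)
    (hV₁ : adjoint V₁ ∘L V₁ = 1) (hV₂ : adjoint V₂ ∘L V₂ = 1)
    (hcomm : V₁ ∘L V₂ = V₂ ∘L V₁)
    (C : H →L[ℂ] H)
    (hC : C = 1 - V₁ ∘L adjoint V₁ - V₂ ∘L adjoint V₂
        + (V₁ ∘L V₂) ∘L adjoint (V₁ ∘L V₂))
    (r : ℝ) (hr₁ : -1 < r) (hr₂ : r < 1)
    (hev : LinearMap.ker ((C - (r : ℂ) • (1 : H →L[ℂ] H) : H →L[ℂ] H) : H →ₗ[ℂ] H) ≠ ⊥) :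
    LinearMap.ker ((C + (r : ℂ) • (1 : H →L[ℂ] H) : H →L[ℂ] H) : H →ₗ[ℂ] H) ≠ ⊥ ∧
    Module.rank ℂ ↥(LinearMap.ker ((C - (r : ℂ) • (1 : H →L[ℂ] H) : H →L[ℂ] H) : H →ₗ[ℂ] H)) =
      Module.rank ℂ ↥(LinearMap.ker ((C + (r : ℂ) • (1 : H →L[ℂ] H) : H →L[ℂ] H) : H →ₗ[ℂ] H)) := by
  rw [← star_eq_adjoint] at hV₁ hV₂
  set P := 1 - V₁ * star V₁
  have hP : IsIdempotentElem P :=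
    (by simpa using IsIdempotentElem.one.mul_mul_of_mul_eq_one hV₁ :
      IsIdempotentElem (V₁ * star V₁)).one_sub
  have hQ := hP.mul_mul_of_mul_eq_one hV₂
  replace hC : C = P - V₂ * P * star V₂ := by
    rw [hC, ← one_sub_sub_add_mul_star_eq hcomm, star_eq_adjoint, star_eq_adjoint, star_eq_adjoint]
    rfl
  have hr : 1 - (r : ℂ) * r ≠ 0 := by norm_cast; nlinarith
  have e := Module.End.eigenspaceEquivNeg (C := (C : H →ₗ[ℂ] H))
    (B := ((1 - P - V₂ * P * star V₂ : H →L[ℂ] H) : H →ₗ[ℂ] H))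
    (by simpa [hC] using congrArg toLinearMapRingHom (hP.sub_mul_one_sub_sub hQ))
    (by simpa [hC] using congrArg toLinearMapRingHom (hP.one_sub_sub_mul_self hQ)) hr
  have hker : ∀ s : ℂ, LinearMap.ker ((C - s • (1 : H →L[ℂ] H) : H →L[ℂ] H) : H →ₗ[ℂ] H) =
      Module.End.eigenspace (C : H →ₗ[ℂ] H) s := fun s => by
    rw [Module.End.eigenspace_def]; rfl
  have hrank := e.rank_eq
  rw [← hker, ← hker, neg_smul, sub_neg_eq_add] at hrank
  refine ⟨fun h => hev ?_, hrank⟩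
  exact Submodule.rank_eq_zero.mp (hrank.trans (Submodule.rank_eq_zero.mpr h))

/-- Let `V₁, V₂` be commuting isometries on a complex Hilbert space,
`V := V₁V₂`, `C := I − V₁V₁* − V₂V₂* + VV*`. If `r ∈ (−1,1)`, `r ≠ 0`, and `r` is an
eigenvalue of `C`, then so is `−r`, and the eigenspaces `ker(C − rI)` and `ker(C + rI)`
have the same dimension. -/
theorem stmt13 {H : Type*} [NormedAddCommGroup H] [InnerProductSpace ℂ H] [CompleteSpace H]
    (V₁ V₂ : H →L[ℂ] H)
    (hV₁ : adjoint V₁ ∘L V₁ = 1) (hV₂ : adjoint V₂ ∘L V₂ = 1)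
    (hcomm : V₁ ∘L V₂ = V₂ ∘L V₁)
    (C : H →L[ℂ] H)
    (hC : C = 1 - V₁ ∘L adjoint V₁ - V₂ ∘L adjoint V₂
        + (V₁ ∘L V₂) ∘L adjoint (V₁ ∘L V₂))
    (r : ℝ) (hr₁ : -1 < r) (hr₂ : r < 1) (hr₀ : r ≠ 0)
    (hev : LinearMap.ker ((C - (r : ℂ) • (1 : H →L[ℂ] H) : H →L[ℂ] H) : H →ₗ[ℂ] H) ≠ ⊥) :
    LinearMap.ker ((C + (r : ℂ) • (1 : H →L[ℂ] H) : H →L[ℂ] H) : H →ₗ[ℂ] H) ≠ ⊥ ∧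
    Module.rank ℂ ↥(LinearMap.ker ((C - (r : ℂ) • (1 : H →L[ℂ] H) : H →L[ℂ] H) : H →ₗ[ℂ] H)) =
      Module.rank ℂ ↥(LinearMap.ker ((C + (r : ℂ) • (1 : H →L[ℂ] H) : H →L[ℂ] H) : H →ₗ[ℂ] H)) :=
  stmt13_general V₁ V₂ hV₁ hV₂ hcomm C hC r hr₁ hr₂ hev
end

section
/- Let V₁ and V₂ be commuting isometries on a complex Hilbert space H. Define d₁ : H → H ⊕₂ H by d₁h = (−V₂h, V₁h) and d₂ : H ⊕₂ H → H by d₂(h₁,h₂) = V₁h₁ + V₂h₂, where H ⊕₂ H is the Hilbert-space direct sum. Then ker d₂ ∩ (ran d₁)ᗮ = {(h, −V₂*V₁h) : h ∈ ker V₂* and V₁h ∈ ran V₂}. -/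
open ContinuousLinearMap
open scoped InnerProductSpace

/-- Let `V₁, V₂` be commuting isometries on a complex Hilbert space `H`,
and let `d₁ : H → H ⊕₂ H`, `d₁h = (−V₂h, V₁h)`, and `d₂ : H ⊕₂ H → H`,
`d₂(h₁,h₂) = V₁h₁ + V₂h₂`. Then
`ker d₂ ∩ (ran d₁)ᗮ = {(h, −V₂*V₁h) : h ∈ ker V₂*, V₁h ∈ ran V₂}`. -/
theorem stmt14 {H : Type*} [NormedAddCommGroup H] [InnerProductSpace ℂ H] [CompleteSpace H]
    (V₁ V₂ : H →L[ℂ] H)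
    (hV₁ : adjoint V₁ ∘L V₁ = 1) (hV₂ : adjoint V₂ ∘L V₂ = 1)
    (hcomm : V₁ ∘L V₂ = V₂ ∘L V₁)
    (d₁ : H →L[ℂ] WithLp 2 (H × H)) (d₂ : WithLp 2 (H × H) →L[ℂ] H)
    (hd₁ : ∀ h : H, d₁ h = (WithLp.equiv 2 (H × H)).symm (-(V₂ h), V₁ h))
    (hd₂ : ∀ p : WithLp 2 (H × H),
      d₂ p = V₁ (WithLp.equiv 2 (H × H) p).1 + V₂ (WithLp.equiv 2 (H × H) p).2) :
    (↑(LinearMap.ker (d₂ : WithLp 2 (H × H) →ₗ[ℂ] H) ⊓ (LinearMap.range (d₁ : H →ₗ[ℂ] WithLp 2 (H × H)))ᗮ) : Set (WithLp 2 (H × H))) =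
      {p : WithLp 2 (H × H) | ∃ h : H, adjoint V₂ h = 0 ∧ V₁ h ∈ LinearMap.range (V₂ : H →ₗ[ℂ] H) ∧
        p = (WithLp.equiv 2 (H × H)).symm (h, -(adjoint V₂ (V₁ h)))} := by
  have hV₁' : ∀ x, adjoint V₁ (V₁ x) = x := fun x => by
    have := congrArg (fun A => A x) hV₁; simpa using this
  have hV₂' : ∀ x, adjoint V₂ (V₂ x) = x := fun x => by
    have := congrArg (fun A => A x) hV₂; simpa using this
  have hadj : ∀ x, adjoint V₂ (adjoint V₁ x) = adjoint V₁ (adjoint V₂ x) := fun x => by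
    have := congrArg (fun A => adjoint A x) hcomm
    simpa [adjoint_comp] using this
  ext p
  simp only [SetLike.mem_coe, Submodule.mem_inf, LinearMap.mem_ker, Set.mem_setOf_eq]
  -- characterize membership in the orthogonal complement
  have horth : p ∈ (LinearMap.range (d₁ : H →ₗ[ℂ] WithLp 2 (H × H)))ᗮ ↔
      adjoint V₁ p.ofLp.2 = adjoint V₂ p.ofLp.1 := by
    constructor
    · intro hp
      refine ext_inner_left ℂ fun g => ?_
      have h1 := hp (d₁ g) ⟨g, rfl⟩
      rw [hd₁ g] at h1
      have : inner (𝕜 := ℂ) (-(V₂ g)) p.ofLp.1 + inner (𝕜 := ℂ) (V₁ g) p.ofLp.2 = 0 := h1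
      rw [inner_neg_left] at this
      have h2 : inner (𝕜 := ℂ) (V₁ g) p.ofLp.2 = inner (𝕜 := ℂ) (V₂ g) p.ofLp.1 := by linear_combination this
      calc inner (𝕜 := ℂ) g (adjoint V₁ p.ofLp.2) = inner (𝕜 := ℂ) (V₁ g) p.ofLp.2 := by
            rw [adjoint_inner_right]
        _ = inner (𝕜 := ℂ) (V₂ g) p.ofLp.1 := h2
        _ = inner (𝕜 := ℂ) g (adjoint V₂ p.ofLp.1) := by rw [adjoint_inner_right]
    · intro hE q hq
      obtain ⟨g, rfl⟩ := hq
      rw [ContinuousLinearMap.coe_coe, hd₁ g]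
      show inner (𝕜 := ℂ) (-(V₂ g)) p.ofLp.1 + inner (𝕜 := ℂ) (V₁ g) p.ofLp.2 = 0
      rw [inner_neg_left, ← adjoint_inner_right, ← adjoint_inner_right, hE]
      ring
  rw [horth]
  constructor
  · rintro ⟨hker, hE⟩
    rw [ContinuousLinearMap.coe_coe, hd₂ p] at hker
    have hker' : V₁ p.ofLp.1 + V₂ p.ofLp.2 = 0 := hker
    have h₂eq : p.ofLp.2 = -(adjoint V₂ (V₁ p.ofLp.1)) := by
      have := congrArg (adjoint V₂) hker'
      simp only [map_add, hV₂', map_zero] at this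
      exact eq_neg_of_add_eq_zero_right this
    refine ⟨p.ofLp.1, ?_, ⟨-p.ofLp.2, ?_⟩, ?_⟩
    · have heq : adjoint V₂ p.ofLp.1 = -(adjoint V₂ p.ofLp.1) := by
        conv_lhs => rw [← hE, h₂eq]
        rw [map_neg, ← hadj, hV₁']
      have h2 : (2 : ℂ) • adjoint V₂ p.ofLp.1 = 0 := by
        rw [two_smul, add_eq_zero_iff_eq_neg]
        exact heq
      simpa using h2
    · rw [map_neg, neg_eq_iff_add_eq_zero, add_comm]
      exact hker'
    · rw [Equiv.eq_symm_apply]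
      exact Prod.ext rfl h₂eq
  · rintro ⟨h, hk, ⟨w, hw⟩, rfl⟩
    constructor
    · rw [ContinuousLinearMap.coe_coe, hd₂]
      show V₁ h + V₂ (-(adjoint V₂ (V₁ h))) = 0
      rw [← hw, ContinuousLinearMap.coe_coe, map_neg, hV₂', add_neg_cancel]
    · show adjoint V₁ (-(adjoint V₂ (V₁ h))) = adjoint V₂ h
      rw [map_neg, ← hadj, hV₁', hk, neg_zero]
end

section
/- Let V₁ and V₂ be commuting isometries on a complex Hilbert space H, V := V₁V₂, W₁ := ker V₁*, and F₂ := P_{W₁}V₂P_{W₁} the Fringe operator. Then: (a) ran F₂ = (ran V₁ + ran V₂) ∩ (ran V₁)ᗮ; (b) ran F₂ is closed if and only if ran V₁ + ran V₂ is closed; (c) {h ∈ W₁ : F₂*h = 0} = (ran V₁ + ran V₂)ᗮ = ker V₁* ∩ ker V₂*. -/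
open ContinuousLinearMap
open scoped InnerProductSpace

/-!
Since `V₁` is an isometry, `P := 1 - V₁V₁*` is the orthogonal projection onto `(ran V₁)ᗮ`, and
because `V₂` commutes with `V₁` it preserves `ran V₁ = ker P`, so `F₂ = P V₂` and
`ran F₂ = P (ran V₂)`. For any subspace `N`, `P⁻¹(P N) = ran V₁ + N` and
`P N = (ran V₁ + N) ∩ (ran V₁)ᗮ`; all three parts follow from these two identities.
-/

namespace Submodule

variable {𝕜 E : Type*} [RCLike 𝕜] [NormedAddCommGroup E] [InnerProductSpace 𝕜 E]
  (K N : Submodule 𝕜 E) [K.HasOrthogonalProjection]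

theorem comap_map_starProjection_orthogonal :
    (N.map (Kᗮ.starProjection : E →ₗ[𝕜] E)).comap (Kᗮ.starProjection : E →ₗ[𝕜] E) = K ⊔ N := by
  rw [comap_map_eq, ker_starProjection, orthogonal_orthogonal, sup_comm]

theorem map_starProjection_orthogonal :
    N.map (Kᗮ.starProjection : E →ₗ[𝕜] E) = (K ⊔ N) ⊓ Kᗮ := by
  refine le_antisymm (le_inf ?_ ?_) fun x hx => ?_
  · rintro _ ⟨n, hn, rfl⟩
    rw [coe_coe, starProjection_orthogonal_val]
    exact sub_mem (mem_sup_right hn) (mem_sup_left (K.starProjection_apply_mem n))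
  · rintro _ ⟨n, -, rfl⟩
    exact Kᗮ.starProjection_apply_mem n
  · rw [← comap_map_starProjection_orthogonal K N] at hx
    obtain ⟨hxKN, hxK⟩ := mem_inf.mp hx
    rwa [mem_comap, coe_coe, starProjection_eq_self_iff.mpr hxK] at hxKN

theorem sup_map_starProjection_orthogonal :
    K ⊔ N.map (Kᗮ.starProjection : E →ₗ[𝕜] E) = K ⊔ N := by
  rw [map_starProjection_orthogonal, inf_comm, ← sup_inf_assoc_of_le _ le_sup_left,
    K.isCompl_orthogonal.sup_eq_top, top_inf_eq]

theorem isClosed_map_starProjection_orthogonal_iff :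
    IsClosed (N.map (Kᗮ.starProjection : E →ₗ[𝕜] E) : Set E) ↔
      IsClosed ((K ⊔ N : Submodule 𝕜 E) : Set E) := by
  refine ⟨fun h => ?_, fun h => ?_⟩
  · rw [← comap_map_starProjection_orthogonal]
    exact h.preimage Kᗮ.starProjection.continuous
  · rw [map_starProjection_orthogonal, coe_inf]
    exact h.inter K.isClosed_orthogonal

end Submodule

namespace ContinuousLinearMap

variable {𝕜 E F : Type*} [RCLike 𝕜] [NormedAddCommGroup E] [InnerProductSpace 𝕜 E] [CompleteSpace E]
  [NormedAddCommGroup F] [InnerProductSpace 𝕜 F] [CompleteSpace F] {V : F →L[𝕜] E}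

theorem hasOrthogonalProjection_range_of_adjoint_comp_self_eq_one (hV : adjoint V ∘L V = 1) :
    (LinearMap.range (V : F →ₗ[𝕜] E)).HasOrthogonalProjection := by
  have : IsClosed (Set.range V) :=
    ((isometry_iff_adjoint_comp_self V).mpr hV).isClosedEmbedding.isClosed_range
  have : CompleteSpace (LinearMap.range (V : F →ₗ[𝕜] E)) := this.completeSpace_coe
  infer_instance

theorem self_comp_adjoint_eq_starProjection_range (hV : adjoint V ∘L V = 1)
    [(LinearMap.range (V : F →ₗ[𝕜] E)).HasOrthogonalProjection] :
    V ∘L adjoint V = (LinearMap.range (V : F →ₗ[𝕜] E)).starProjection := by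
  ext x
  have hmem : V (adjoint V x) ∈ LinearMap.range (V : F →ₗ[𝕜] E) :=
    LinearMap.mem_range_self (V : F →ₗ[𝕜] E) _
  have hperp : x - V (adjoint V x) ∈ (LinearMap.range (V : F →ₗ[𝕜] E))ᗮ := by
    rw [orthogonal_range, LinearMap.mem_ker, coe_coe, map_sub, ← comp_apply (adjoint V), hV,
      one_apply_eq_self, sub_self]
  exact (Submodule.eq_starProjection_of_mem_orthogonal hmem hperp).symm

theorem fringe_eq_comp {V₁ V₂ : E →L[𝕜] E} (hV₁ : adjoint V₁ ∘L V₁ = 1) (hcomm : V₁ ∘L V₂ = V₂ ∘L V₁) :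
    (1 - V₁ ∘L adjoint V₁) ∘L V₂ ∘L (1 - V₁ ∘L adjoint V₁) = (1 - V₁ ∘L adjoint V₁) ∘L V₂ := by
  have hV₁' : adjoint V₁ * V₁ = 1 := hV₁
  have hcomm' : V₁ * V₂ = V₂ * V₁ := hcomm
  show (1 - V₁ * adjoint V₁) * (V₂ * (1 - V₁ * adjoint V₁)) = (1 - V₁ * adjoint V₁) * V₂
  have hkill : (1 - V₁ * adjoint V₁) * V₁ = 0 := by
    rw [sub_mul, mul_assoc, hV₁', one_mul, mul_one, sub_self]
  calc (1 - V₁ * adjoint V₁) * (V₂ * (1 - V₁ * adjoint V₁))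
      = (1 - V₁ * adjoint V₁) * V₂ - (1 - V₁ * adjoint V₁) * V₁ * V₂ * adjoint V₁ := by
        rw [mul_assoc _ V₁, hcomm']; noncomm_ring
    _ = (1 - V₁ * adjoint V₁) * V₂ := by rw [hkill, zero_mul, zero_mul, sub_zero]

end ContinuousLinearMap

theorem stmt15_general {H : Type*} [NormedAddCommGroup H] [InnerProductSpace ℂ H] [CompleteSpace H]
    (V₁ V₂ : H →L[ℂ] H)
    (hV₁ : adjoint V₁ ∘L V₁ = 1)
    (hcomm : V₁ ∘L V₂ = V₂ ∘L V₁)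
    (F₂ : H →L[ℂ] H)
    (hF₂ : F₂ = (1 - V₁ ∘L adjoint V₁) ∘L (V₂ ∘L (1 - V₁ ∘L adjoint V₁))) :
    (LinearMap.range (F₂ : H →ₗ[ℂ] H) =
        (LinearMap.range (V₁ : H →ₗ[ℂ] H) ⊔ LinearMap.range (V₂ : H →ₗ[ℂ] H)) ⊓ (LinearMap.range (V₁ : H →ₗ[ℂ] H))ᗮ) ∧
    (IsClosed (LinearMap.range (F₂ : H →ₗ[ℂ] H) : Set H) ↔
        IsClosed ((LinearMap.range (V₁ : H →ₗ[ℂ] H) ⊔ LinearMap.range (V₂ : H →ₗ[ℂ] H) : Submodule ℂ H) : Set H)) ∧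
    (LinearMap.ker (adjoint F₂ : H →ₗ[ℂ] H) ⊓ LinearMap.ker (adjoint V₁ : H →ₗ[ℂ] H) =
        (LinearMap.range (V₁ : H →ₗ[ℂ] H) ⊔ LinearMap.range (V₂ : H →ₗ[ℂ] H))ᗮ) ∧
    ((LinearMap.range (V₁ : H →ₗ[ℂ] H) ⊔ LinearMap.range (V₂ : H →ₗ[ℂ] H))ᗮ =
        LinearMap.ker (adjoint V₁ : H →ₗ[ℂ] H) ⊓ LinearMap.ker (adjoint V₂ : H →ₗ[ℂ] H)) := by
  have := hasOrthogonalProjection_range_of_adjoint_comp_self_eq_one hV₁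
  set K := LinearMap.range (V₁ : H →ₗ[ℂ] H)
  have hP : 1 - V₁ ∘L adjoint V₁ = Kᗮ.starProjection := by
    rw [Submodule.starProjection_orthogonal', self_comp_adjoint_eq_starProjection_range hV₁]
  have hF₂_range : LinearMap.range (F₂ : H →ₗ[ℂ] H) =
      (LinearMap.range (V₂ : H →ₗ[ℂ] H)).map (Kᗮ.starProjection : H →ₗ[ℂ] H) := by
    rw [hF₂, fringe_eq_comp hV₁ hcomm, hP]
    exact LinearMap.range_comp _ _
  refine ⟨?_, ?_, ?_, ?_⟩
  · rw [hF₂_range, Submodule.map_starProjection_orthogonal]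
  · rw [hF₂_range, Submodule.isClosed_map_starProjection_orthogonal_iff]
  · rw [← orthogonal_range, ← orthogonal_range, Submodule.inf_orthogonal, hF₂_range, sup_comm,
      Submodule.sup_map_starProjection_orthogonal]
  · rw [← orthogonal_range, ← orthogonal_range, Submodule.inf_orthogonal]

/-- Let `V₁, V₂` be commuting isometries on a complex Hilbert space,
`W₁ := ker V₁*`, `F₂ := P_{W₁}V₂P_{W₁}`. Then
(a) `ran F₂ = (ran V₁ + ran V₂) ∩ (ran V₁)ᗮ`;
(b) `ran F₂` is closed iff `ran V₁ + ran V₂` is closed;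
(c) `{h ∈ W₁ : F₂*h = 0} = (ran V₁ + ran V₂)ᗮ = ker V₁* ∩ ker V₂*`. -/
theorem stmt15 {H : Type*} [NormedAddCommGroup H] [InnerProductSpace ℂ H] [CompleteSpace H]
    (V₁ V₂ : H →L[ℂ] H)
    (hV₁ : adjoint V₁ ∘L V₁ = 1) (hV₂ : adjoint V₂ ∘L V₂ = 1)
    (hcomm : V₁ ∘L V₂ = V₂ ∘L V₁)
    (F₂ : H →L[ℂ] H)
    (hF₂ : F₂ = (1 - V₁ ∘L adjoint V₁) ∘L (V₂ ∘L (1 - V₁ ∘L adjoint V₁))) :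
    (LinearMap.range (F₂ : H →ₗ[ℂ] H) =
        (LinearMap.range (V₁ : H →ₗ[ℂ] H) ⊔ LinearMap.range (V₂ : H →ₗ[ℂ] H)) ⊓ (LinearMap.range (V₁ : H →ₗ[ℂ] H))ᗮ) ∧
    (IsClosed (LinearMap.range (F₂ : H →ₗ[ℂ] H) : Set H) ↔
        IsClosed ((LinearMap.range (V₁ : H →ₗ[ℂ] H) ⊔ LinearMap.range (V₂ : H →ₗ[ℂ] H) : Submodule ℂ H) : Set H)) ∧
    (LinearMap.ker (adjoint F₂ : H →ₗ[ℂ] H) ⊓ LinearMap.ker (adjoint V₁ : H →ₗ[ℂ] H) =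
        (LinearMap.range (V₁ : H →ₗ[ℂ] H) ⊔ LinearMap.range (V₂ : H →ₗ[ℂ] H))ᗮ) ∧
    ((LinearMap.range (V₁ : H →ₗ[ℂ] H) ⊔ LinearMap.range (V₂ : H →ₗ[ℂ] H))ᗮ =
        LinearMap.ker (adjoint V₁ : H →ₗ[ℂ] H) ⊓ LinearMap.ker (adjoint V₂ : H →ₗ[ℂ] H)) :=
  stmt15_general V₁ V₂ hV₁ hcomm F₂ hF₂
end

section
/- Let V₁ and V₂ be commuting isometries on a complex Hilbert space H, V := V₁V₂, and C := I − V₁V₁* − V₂V₂* + VV*. If C is compact and semidefinite (C ≤ 0 or C ≥ 0), then C has finite rank, i.e., ran C is a finite-dimensional subspace of H. -/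
open ContinuousLinearMap

/-!
With `D := 1 - V₁V₁*` and `Q := V₂DV₂*`, commutativity gives `C = D - Q`, and both `D` and `Q`
are orthogonal projections because `V₁` and `V₂` are isometries. For projections, `Q ≤ D` forces
`D - Q` to be a projection as well, so `C` (or `-C`) is a compact projection; the identity of
its range is then a compact operator, and Riesz's theorem makes the range finite-dimensional.
-/

theorem IsStarProjection.conjugate_of_star_mul_self_eq_one {R : Type*} [Semiring R] [StarRing R]
    {p v : R} (hp : IsStarProjection p) (hv : star v * v = 1) :
    IsStarProjection (v * p * star v) where
  isIdempotentElem := by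
    rw [IsIdempotentElem]
    calc v * p * star v * (v * p * star v) = v * (p * (star v * v) * p) * star v := by
          simp only [mul_assoc]
      _ = v * p * star v := by rw [hv, mul_one, hp.isIdempotentElem.eq, mul_assoc]
  isSelfAdjoint := by
    rw [IsSelfAdjoint, star_mul, star_mul, star_star, hp.isSelfAdjoint.star_eq, mul_assoc]

theorem ContinuousLinearMap.IsIdempotentElem.finiteDimensional_range {𝕜 M : Type*}
    [NontriviallyNormedField 𝕜] [CompleteSpace 𝕜] [AddCommGroup M] [Module 𝕜 M]
    [TopologicalSpace M] [T2Space M] [IsTopologicalAddGroup M] [ContinuousSMul 𝕜 M]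
    {p : M →L[𝕜] M} (hp : IsIdempotentElem p) (hc : IsCompactOperator p) :
    FiniteDimensional 𝕜 (LinearMap.range (p : M →ₗ[𝕜] M)) := by
  have hmaps : ∀ v ∈ LinearMap.range (p : M →ₗ[𝕜] M), p v ∈ LinearMap.range (p : M →ₗ[𝕜] M) :=
    fun v _ => LinearMap.mem_range_self _ v
  have hid : (p : M →ₗ[𝕜] M).restrict hmaps = LinearMap.id := LinearMap.ext fun ⟨v, hv⟩ =>
    Subtype.ext ((LinearMap.IsIdempotentElem.mem_range_iff hp.toLinearMap).1 hv)
  have hcid := hc.restrict hmaps hp.isClosed_range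
  rw [hid] at hcid
  exact FiniteDimensional.of_isCompactOperator_id hcid

/-- Let `V₁, V₂` be commuting isometries on a complex Hilbert space,
`V := V₁V₂`, and `C := I − V₁V₁* − V₂V₂* + VV*`. If `C` is compact and semidefinite
(`C ≥ 0` or `C ≤ 0`), then `C` has finite rank. -/
theorem stmt18 {H : Type*} [NormedAddCommGroup H] [InnerProductSpace ℂ H] [CompleteSpace H]
    (V₁ V₂ : H →L[ℂ] H)
    (hV₁ : adjoint V₁ ∘L V₁ = 1) (hV₂ : adjoint V₂ ∘L V₂ = 1)
    (hcomm : V₁ ∘L V₂ = V₂ ∘L V₁)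
    (C : H →L[ℂ] H)
    (hC : C = 1 - V₁ ∘L adjoint V₁ - V₂ ∘L adjoint V₂
        + (V₁ ∘L V₂) ∘L adjoint (V₁ ∘L V₂))
    (hcompact : IsCompactOperator ⇑C)
    (hsemi : C.IsPositive ∨ (-C).IsPositive) :
    FiniteDimensional ℂ ↥(LinearMap.range (C : H →ₗ[ℂ] H)) := by
  set D := 1 - V₁ * star V₁
  set Q := V₂ * D * star V₂
  have hD : IsStarProjection D := by
    simpa only [mul_one] using
      ((IsStarProjection.one _).conjugate_of_star_mul_self_eq_one hV₁).one_sub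
  have hQ : IsStarProjection Q := hD.conjugate_of_star_mul_self_eq_one hV₂
  have hCDQ : C = D - Q := by
    rw [hC, hcomm, adjoint_comp]
    simp only [← mul_def, ← star_eq_adjoint, D, Q]
    noncomm_ring
  rcases hsemi with hpos | hneg
  · have hC : IsStarProjection C := hCDQ ▸ (hQ.le_iff_sub hD).1 ((le_def Q D).2 (hCDQ ▸ hpos))
    exact hC.isIdempotentElem.finiteDimensional_range hcompact
  · have hmC : -C = Q - D := by rw [hCDQ, neg_sub]
    have hC : IsStarProjection (-C) := hmC ▸ (hD.le_iff_sub hQ).1 ((le_def D Q).2 (hmC ▸ hneg))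
    rw [← LinearMap.range_neg, ← toLinearMap_neg]
    exact hC.isIdempotentElem.finiteDimensional_range hcompact.neg
end
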